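/- arXiv:2410.04867 — 8 statements merged into one kernel-verified Lean document; each statement's English description precedes it below -/
import Mathlib

section
/- Let A be a symmetric N×N real matrix which is a B-matrix, and let Q ≥ 0. Then A is positive definite, 1ᵀA⁻¹1 > 0, and the unique minimizer ξ* = (Q/(1ᵀA⁻¹1))·A⁻¹1 of x ↦ (1/2)·xᵀAx over {x ∈ ℝ^N : 1ᵀx = Q} has all components nonnegative. -/
open Matrix Finset

/-- A real square matrix is a *B-matrix* if every row sum is positive and every off-diagonal
entry is strictly smaller than the corresponding row mean. -/
def IsBMatrix {N : ℕ} (A : Matrix (Fin N) (Fin N) ℝ) : Prop :=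
  ∀ i, 0 < ∑ k, A i k ∧ ∀ j, j ≠ i → A i j < (∑ k, A i k) / (N : ℝ)

namespace BMatrixAux

variable {N : ℕ}

noncomputable def rmax (A : Matrix (Fin N) (Fin N) ℝ) (i : Fin N) : ℝ :=
  (insert (0:ℝ) ((Finset.univ.erase i).image (A i))).max' (Finset.insert_nonempty _ _)

lemma rmax_nonneg (A : Matrix (Fin N) (Fin N) ℝ) (i : Fin N) : 0 ≤ rmax A i :=
  Finset.le_max' _ _ (Finset.mem_insert_self _ _)

lemma le_rmax (A : Matrix (Fin N) (Fin N) ℝ) {i j : Fin N} (h : j ≠ i) : A i j ≤ rmax A i :=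
  Finset.le_max' _ _ (Finset.mem_insert_of_mem
    (Finset.mem_image_of_mem _ (Finset.mem_erase.2 ⟨h, Finset.mem_univ _⟩)))

lemma rmax_lt {A : Matrix (Fin N) (Fin N) ℝ} (hB : IsBMatrix A) (i : Fin N) :
    (N : ℝ) * rmax A i < ∑ k, A i k := by
  have hN : (0:ℝ) < N := by exact_mod_cast i.pos
  have hmem := Finset.max'_mem (insert (0:ℝ) ((Finset.univ.erase i).image (A i)))
    (Finset.insert_nonempty _ _)
  rcases Finset.mem_insert.1 hmem with h0 | himg
  · have h0' : rmax A i = 0 := h0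
    rw [h0', mul_zero]; exact (hB i).1
  · obtain ⟨j, hj, hAij⟩ := Finset.mem_image.1 himg
    have hji : j ≠ i := (Finset.mem_erase.1 hj).1
    have h2 := (hB i).2 j hji
    have h3 := (lt_div_iff₀ hN).1 h2
    have h4 : rmax A i = A i j := hAij.symm
    rw [h4]; linarith

lemma key1 {A : Matrix (Fin N) (Fin N) ℝ} (hB : IsBMatrix A) {x : Fin N → ℝ} {i : Fin N}
    (hmax : ∀ j, x j ≤ x i) (hpos : 0 < x i) :
    rmax A i * (∑ j, x j) < A.mulVec x i := by
  set r := rmax A i with hr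
  have expand : A.mulVec x i = (∑ j, (A i j - r) * x j) + r * ∑ j, x j := by
    simp [Matrix.mulVec, dotProduct, sub_mul, Finset.sum_sub_distrib, Finset.mul_sum]
  have hterm : ∀ j : Fin N, (A i j - r) * x i ≤ (A i j - r) * x j := by
    intro j
    rcases eq_or_ne j i with rfl | hji
    · exact le_rfl
    · exact mul_le_mul_of_nonpos_left (hmax j) (by linarith [le_rmax A hji])
  have hsum : (∑ j, (A i j - r) * x i) ≤ ∑ j, (A i j - r) * x j :=
    Finset.sum_le_sum fun j _ => hterm j
  have hsum2 : (∑ j, (A i j - r) * x i) = ((∑ j, A i j) - N * r) * x i := by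
    rw [← Finset.sum_mul]
    congr 1
    rw [Finset.sum_sub_distrib]
    simp [Finset.card_univ]
  have hpos2 : 0 < ((∑ j, A i j) - N * r) * x i :=
    mul_pos (by linarith [rmax_lt hB i]) hpos
  rw [expand]
  linarith [hsum, hsum2 ▸ hsum, hpos2]


lemma sum_neg {A : Matrix (Fin N) (Fin N) ℝ} (hB : IsBMatrix A) {x : Fin N → ℝ}
    (hx0 : A.mulVec x = 0) (hpos : ∃ j, 0 < x j) : ∑ j, x j < 0 := by
  obtain ⟨j0, hj0⟩ := hpos
  have : Nonempty (Fin N) := ⟨j0⟩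
  obtain ⟨i, -, hi⟩ := Finset.exists_max_image Finset.univ x Finset.univ_nonempty
  have hmax : ∀ j, x j ≤ x i := fun j => hi j (Finset.mem_univ _)
  have hxi : 0 < x i := lt_of_lt_of_le hj0 (hmax j0)
  have hk := key1 hB hmax hxi
  rw [hx0] at hk
  simp only [Pi.zero_apply] at hk
  nlinarith [rmax_nonneg A i]

lemma nonsingular {A : Matrix (Fin N) (Fin N) ℝ} (hB : IsBMatrix A) (x : Fin N → ℝ)
    (hx0 : A.mulVec x = 0) : x = 0 := by
  by_contra hne
  obtain ⟨j0, hj0⟩ := Function.ne_iff.1 hne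
  have hx0' : A.mulVec (-x) = 0 := by rw [Matrix.mulVec_neg, hx0, neg_zero]
  by_cases h : ∃ j, 0 < x j
  · have hs := sum_neg hB hx0 h
    have h2 : ∃ j, 0 < (-x) j := by
      by_contra hc
      push_neg at hc
      have : 0 ≤ ∑ j, x j := Finset.sum_nonneg fun j _ => by
        have := hc j; simp only [Pi.neg_apply] at this; linarith
      linarith
    have hs2 := sum_neg hB hx0' h2
    simp only [Pi.neg_apply, Finset.sum_neg_distrib] at hs2
    linarith
  · push_neg at h
    have hj0' : x j0 < 0 := lt_of_le_of_ne (h j0) hj0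
    have h2 : ∃ j, 0 < (-x) j := ⟨j0, by simpa using hj0'⟩
    have hs2 := sum_neg hB hx0' h2
    simp only [Pi.neg_apply, Finset.sum_neg_distrib] at hs2
    have : ∑ j, x j ≤ 0 := Finset.sum_nonpos fun j _ => h j
    linarith

lemma shift_isB {A : Matrix (Fin N) (Fin N) ℝ} (hB : IsBMatrix A) {c : ℝ} (hc : 0 ≤ c) :
    IsBMatrix (A + c • (1 : Matrix (Fin N) (Fin N) ℝ)) := by
  intro i
  have hrow : ∑ k, (A + c • (1 : Matrix (Fin N) (Fin N) ℝ)) i k = (∑ k, A i k) + c := by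
    simp [Matrix.add_apply, Matrix.smul_apply, Matrix.one_apply, Finset.sum_add_distrib,
      Finset.sum_ite_eq, mul_ite]
  refine ⟨by rw [hrow]; linarith [(hB i).1], fun j hj => ?_⟩
  have hij : (A + c • (1 : Matrix (Fin N) (Fin N) ℝ)) i j = A i j := by
    simp [Matrix.add_apply, Matrix.smul_apply, Matrix.one_apply, (Ne.symm hj)]
  rw [hij, hrow]
  have hN : (0:ℝ) < N := by exact_mod_cast i.pos
  have := (hB i).2 j hj
  have hdiv : (∑ k, A i k) / N ≤ ((∑ k, A i k) + c) / N := by gcongr <;> linarith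
  linarith

lemma isHermitian_of_isSymm {A : Matrix (Fin N) (Fin N) ℝ} (hsymm : A.IsSymm) :
    A.IsHermitian := by
  rwa [Matrix.IsHermitian, Matrix.conjTranspose_eq_transpose_of_trivial]

lemma eigenvalues_pos {A : Matrix (Fin N) (Fin N) ℝ} (hsymm : A.IsSymm) (hB : IsBMatrix A)
    (j : Fin N) : 0 < (isHermitian_of_isSymm hsymm).eigenvalues j := by
  set hA := isHermitian_of_isSymm hsymm
  by_contra h
  push_neg at h
  set μ := hA.eigenvalues j with hμ
  have hv := hA.mulVec_eigenvectorBasis j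
  set v : Fin N → ℝ := ⇑(hA.eigenvectorBasis j) with hvdef
  have hBM := shift_isB hB (neg_nonneg.2 h)
  have hker : (A + (-μ) • (1:Matrix (Fin N) (Fin N) ℝ)).mulVec v = 0 := by
    rw [Matrix.add_mulVec, Matrix.smul_mulVec, Matrix.one_mulVec, hv]
    funext k
    simp [neg_smul, hμ]
  have hv0 : v = 0 := nonsingular hBM v hker
  exact hA.eigenvectorBasis.orthonormal.ne_zero j (by
    ext k
    exact congrFun hv0 k)

lemma posDef {A : Matrix (Fin N) (Fin N) ℝ} (hsymm : A.IsSymm) (hB : IsBMatrix A) :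
    A.PosDef := by
  have hA := isHermitian_of_isSymm hsymm
  refine PosDef.of_dotProduct_mulVec_pos hA fun x hx => ?_
  set U : Matrix (Fin N) (Fin N) ℝ := (hA.eigenvectorUnitary : Matrix (Fin N) (Fin N) ℝ) with hU
  have hUU : U * star U = 1 := (Matrix.mem_unitaryGroup_iff).mp hA.eigenvectorUnitary.2
  set y := star U *ᵥ x with hy
  have hyne : y ≠ 0 := by
    intro h0
    apply hx
    have : (U * star U) *ᵥ x = U *ᵥ y := by rw [← Matrix.mulVec_mulVec, hy]
    rw [hUU, Matrix.one_mulVec] at this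
    rw [this, h0, Matrix.mulVec_zero]
  obtain ⟨k0, hk0⟩ := Function.ne_iff.1 hyne
  have hspec := hA.spectral_theorem
  have hform : dotProduct (star x) (A *ᵥ x) = ∑ i, hA.eigenvalues i * (y i * y i) := by
    conv_lhs => rw [hspec, Unitary.conjStarAlgAut_apply]
    rw [← Matrix.mulVec_mulVec, ← Matrix.mulVec_mulVec]
    rw [Matrix.dotProduct_mulVec]
    have hstx : star x = x := by simp
    have hvm : (star x) ᵥ* U = y := by
      rw [hstx, hy, Matrix.star_eq_conjTranspose, Matrix.conjTranspose_eq_transpose_of_trivial,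
        Matrix.mulVec_transpose]
    rw [hvm]
    simp only [dotProduct, Matrix.mulVec_diagonal]
    congr 1
    funext i
    simp [Function.comp]
    ring
  rw [hform]
  apply Finset.sum_pos'
  · intro i _
    have := eigenvalues_pos hsymm hB i
    nlinarith [sq_nonneg (y i), this]
  · refine ⟨k0, Finset.mem_univ _, ?_⟩
    have := eigenvalues_pos hsymm hB k0
    have h2 : 0 < y k0 * y k0 := by
      rcases lt_or_gt_of_ne (show y k0 ≠ 0 by simpa using hk0) with h | h <;> nlinarith
    exact mul_pos this h2

lemma pos_of_nonneg_solution {A : Matrix (Fin N) (Fin N) ℝ} (hsymm : A.IsSymm)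
    (hB : IsBMatrix A) {w : Fin N → ℝ} (hw : A.mulVec w = 1) (hnn : ∀ i, 0 ≤ w i) :
    ∀ m, 0 < w m := by
  intro m
  rcases (hnn m).lt_or_eq with h | h
  · exact h
  exfalso
  have hwm : w m = 0 := h.symm
  have hN0 : (0:ℝ) < N := by exact_mod_cast m.pos
  have hsym' : ∀ j k, A j k = A k j := fun j k => by
    have := congrFun (congrFun hsymm j) k
    simpa [Matrix.transpose_apply] using this.symm
  have hrow : ∀ j, ∑ k, A j k * w k = 1 := fun j => by
    have := congrFun hw j
    simpa [Matrix.mulVec, dotProduct] using this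
  have hswap : ∑ j, w j * (∑ k, A j k) = N := by
    calc ∑ j, w j * (∑ k, A j k) = ∑ j, ∑ k, w j * A j k := by
          simp [Finset.mul_sum]
      _ = ∑ k, ∑ j, w j * A j k := Finset.sum_comm
      _ = ∑ k, ∑ j, A k j * w j := by
          refine Finset.sum_congr rfl fun k _ => Finset.sum_congr rfl fun j _ => ?_
          rw [hsym' j k, mul_comm]
      _ = ∑ k : Fin N, (1:ℝ) := Finset.sum_congr rfl fun k _ => hrow k
      _ = N := by simp
  have hexists : ∃ j0, j0 ≠ m ∧ 0 < w j0 := by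
    by_contra hc
    push_neg at hc
    have hz : ∑ k, A m k * w k = 0 := Finset.sum_eq_zero fun k _ => by
      rcases eq_or_ne k m with rfl | hk
      · rw [hwm, mul_zero]
      · rw [le_antisymm (hc k hk) (hnn k), mul_zero]
    rw [hrow m] at hz
    norm_num at hz
  obtain ⟨j0, hj0m, hj0pos⟩ := hexists
  have h1 : ∑ j ∈ Finset.univ.erase m, A m j * w j = 1 := by
    have h2 := hrow m
    rw [← Finset.add_sum_erase _ _ (Finset.mem_univ m), hwm, mul_zero, zero_add] at h2
    exact h2
  have hstrict : (1:ℝ) < ∑ j ∈ Finset.univ.erase m, (∑ k, A j k) / N * w j := by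
    rw [← h1]
    apply Finset.sum_lt_sum
    · intro j hj
      have hjm : j ≠ m := (Finset.mem_erase.1 hj).1
      have : A m j < (∑ k, A j k) / N := by
        rw [hsym' m j]; exact (hB j).2 m (Ne.symm hjm)
      exact mul_le_mul_of_nonneg_right this.le (hnn j)
    · refine ⟨j0, Finset.mem_erase.2 ⟨hj0m, Finset.mem_univ _⟩, ?_⟩
      have : A m j0 < (∑ k, A j0 k) / N := by
        rw [hsym' m j0]; exact (hB j0).2 m (Ne.symm hj0m)
      exact mul_lt_mul_of_pos_right this hj0pos
  have hle : ∑ j ∈ Finset.univ.erase m, (∑ k, A j k) / N * w j = 1 := by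
    have e1 : ∑ j ∈ Finset.univ.erase m, (∑ k, A j k) / N * w j
        = (∑ j ∈ Finset.univ.erase m, w j * (∑ k, A j k)) / N := by
      rw [Finset.sum_div]
      exact Finset.sum_congr rfl fun j _ => by ring
    have e2 : ∑ j ∈ Finset.univ.erase m, w j * (∑ k, A j k) = N := by
      have h3 := hswap
      rw [← Finset.add_sum_erase _ _ (Finset.mem_univ m), hwm, zero_mul, zero_add] at h3
      exact h3
    rw [e1, e2, div_self (ne_of_gt hN0)]
  linarith

lemma inv_one_nonneg (hN : 1 ≤ N) {A : Matrix (Fin N) (Fin N) ℝ} (hsymm : A.IsSymm)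
    (hB : IsBMatrix A) : ∀ i, 0 ≤ (A⁻¹ *ᵥ (1 : Fin N → ℝ)) i := by
  have : Nonempty (Fin N) := ⟨⟨0, hN⟩⟩
  set f : ℝ → Matrix (Fin N) (Fin N) ℝ :=
    fun t => (1 - t) • (1 : Matrix (Fin N) (Fin N) ℝ) + t • A with hfdef
  have hf1 : f 1 = A := by simp [hfdef]
  have hf0 : f 0 = 1 := by simp [hfdef]
  have hfsym : ∀ t, (f t).IsSymm := by
    intro t
    simp [Matrix.IsSymm, hfdef, Matrix.transpose_add, Matrix.transpose_smul,
      Matrix.transpose_one, hsymm.eq]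
  have hfB : ∀ t ∈ Set.Icc (0:ℝ) 1, IsBMatrix (f t) := by
    rintro t ⟨ht0, ht1⟩ i
    have hN0 : (0:ℝ) < N := by exact_mod_cast i.pos
    have hrowsum : ∑ k, f t i k = (1 - t) + t * (∑ k, A i k) := by
      simp [hfdef, Matrix.add_apply, Matrix.smul_apply, Matrix.one_apply,
        Finset.sum_add_distrib, Finset.mul_sum, Finset.sum_ite_eq, mul_ite]
    have hs := (hB i).1
    have hrowpos : 0 < (1 - t) + t * (∑ k, A i k) := by
      rcases ht0.lt_or_eq with ht | ht
      · nlinarith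
      · rw [← ht]; norm_num
    refine ⟨by rw [hrowsum]; exact hrowpos, fun j hj => ?_⟩
    have hij : f t i j = t * A i j := by
      simp [hfdef, Matrix.add_apply, Matrix.smul_apply, Matrix.one_apply_ne (Ne.symm hj)]
    rw [hij, hrowsum, lt_div_iff₀ hN0]
    have h3 : A i j * N < ∑ k, A i k := (lt_div_iff₀ hN0).1 ((hB i).2 j hj)
    rcases ht0.lt_or_eq with ht | ht
    · nlinarith
    · rw [← ht]; norm_num
  have hfPD : ∀ t ∈ Set.Icc (0:ℝ) 1, (f t).PosDef := fun t ht => posDef (hfsym t) (hfB t ht)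
  have hdet : ∀ t ∈ Set.Icc (0:ℝ) 1, (f t).det ≠ 0 := fun t ht => (hfPD t ht).det_pos.ne'
  have hfc : Continuous f :=
    ((continuous_const.sub continuous_id).smul continuous_const).add
      (continuous_id.smul continuous_const)
  set w : ℝ → Fin N → ℝ := fun t => ((f t).det)⁻¹ • ((f t).adjugate *ᵥ 1) with hwdef
  have hwc : ∀ i, ContinuousOn (fun t => w t i) (Set.Icc (0:ℝ) 1) := by
    intro i
    have h1 : Continuous fun t => ((f t).adjugate *ᵥ (1 : Fin N → ℝ)) i :=
      (continuous_apply i).comp (hfc.matrix_adjugate.matrix_mulVec continuous_const)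
    exact ((hfc.matrix_det.continuousOn.inv₀ hdet).mul h1.continuousOn)
  have hweq : ∀ t ∈ Set.Icc (0:ℝ) 1, w t = (f t)⁻¹ *ᵥ 1 := by
    intro t ht
    rw [hwdef]
    rw [Matrix.inv_def, Ring.inverse_eq_inv', Matrix.smul_mulVec]
  have hsolve : ∀ t ∈ Set.Icc (0:ℝ) 1, (f t).mulVec (w t) = 1 := by
    intro t ht
    rw [hweq t ht, Matrix.mulVec_mulVec, Matrix.mul_nonsing_inv _ ((hdet t ht).isUnit),
      Matrix.one_mulVec]
  set K : Set ℝ := {t | t ∈ Set.Icc (0:ℝ) 1 ∧ ∀ i, 0 ≤ w t i} with hKdef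
  have hK0 : (0:ℝ) ∈ K := by
    refine ⟨⟨le_refl _, zero_le_one⟩, fun i => ?_⟩
    simp [hwdef, hf0, Matrix.det_one, Matrix.adjugate_one]
  have hKclosed : IsClosed K := by
    have : K = ⋂ i : Fin N,
        (Set.Icc (0:ℝ) 1 ∩ (fun t => w t i) ⁻¹' Set.Ici 0) := by
      ext t
      simp only [hKdef, Set.mem_iInter, Set.mem_inter_iff, Set.mem_setOf_eq,
        Set.mem_preimage, Set.mem_Ici]
      constructor
      · rintro ⟨h1, h2⟩ i; exact ⟨h1, h2 i⟩
      · intro h; exact ⟨(h ⟨0, hN⟩).1, fun i => (h i).2⟩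
    rw [this]
    exact isClosed_iInter fun i =>
      (hwc i).preimage_isClosed_of_isClosed isClosed_Icc isClosed_Ici
  have hKbdd : BddAbove K := ⟨1, fun t ht => ht.1.2⟩
  have hKne : K.Nonempty := ⟨0, hK0⟩
  set ts := sSup K with hts
  have htsK : ts ∈ K := hKclosed.csSup_mem hKne hKbdd
  have htspos : ∀ i, 0 < w ts i :=
    pos_of_nonneg_solution (hfsym ts) (hfB ts htsK.1) (hsolve ts htsK.1) htsK.2
  have hts1 : ts = 1 := by
    by_contra hne
    have htlt : ts < 1 := lt_of_le_of_ne htsK.1.2 hne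
    have hev : ∀ᶠ t in nhdsWithin ts (Set.Icc (0:ℝ) 1), ∀ i, 0 < w t i := by
      rw [Filter.eventually_all]
      intro i
      exact (hwc i ts htsK.1) (Ioi_mem_nhds (htspos i))
    have hsub : Set.Ioc ts 1 ⊆ Set.Icc (0:ℝ) 1 :=
      fun x hx => ⟨le_trans htsK.1.1 hx.1.le, hx.2⟩
    have hev2 : ∀ᶠ t in nhdsWithin ts (Set.Ioc ts 1), ∀ i, 0 < w t i :=
      hev.filter_mono (nhdsWithin_mono _ hsub)
    have hnb : (nhdsWithin ts (Set.Ioc ts 1)).NeBot := left_nhdsWithin_Ioc_neBot htlt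
    obtain ⟨t', ht'pos, ht'mem⟩ := (hev2.and eventually_mem_nhdsWithin).exists
    have ht'K : t' ∈ K := ⟨⟨le_trans htsK.1.1 ht'mem.1.le, ht'mem.2⟩,
      fun i => (ht'pos i).le⟩
    have : t' ≤ ts := le_csSup hKbdd ht'K
    exact absurd this (not_le.2 ht'mem.1)
  intro i
  have h1K : (1:ℝ) ∈ K := hts1 ▸ htsK
  have := h1K.2 i
  rwa [hweq 1 h1K.1, hf1] at this

end BMatrixAux

open BMatrixAux in
/-- A symmetric B-matrix is positive definite, `1ᵀ A⁻¹ 1 > 0`, and for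
`Q ≥ 0` the unique minimizer `ξ* = (Q / (1ᵀ A⁻¹ 1)) • A⁻¹ 1` of `x ↦ (1/2) xᵀ A x` over
`{x : 1ᵀ x = Q}` has all components nonnegative. -/
theorem stmt3 (N : ℕ) (hN : 1 ≤ N) (A : Matrix (Fin N) (Fin N) ℝ)
    (hsymm : A.IsSymm) (hB : IsBMatrix A) (Q : ℝ) (hQ : 0 ≤ Q) :
    A.PosDef ∧
    0 < (1 : Fin N → ℝ) ⬝ᵥ A⁻¹.mulVec 1 ∧
    ∀ ξstar : Fin N → ℝ,
      ξstar = (Q / ((1 : Fin N → ℝ) ⬝ᵥ A⁻¹.mulVec 1)) • A⁻¹.mulVec 1 →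
      ((1 : Fin N → ℝ) ⬝ᵥ ξstar = Q ∧
       (∀ x : Fin N → ℝ, (1 : Fin N → ℝ) ⬝ᵥ x = Q → x ≠ ξstar →
         (1 / 2) * (ξstar ⬝ᵥ A.mulVec ξstar) < (1 / 2) * (x ⬝ᵥ A.mulVec x)) ∧
       ∀ i, 0 ≤ ξstar i) := by
  have hPD : A.PosDef := posDef hsymm hB
  have hone : (1 : Fin N → ℝ) ≠ 0 := by
    intro h
    have := congrFun h ⟨0, hN⟩
    norm_num at this
  have hinvPD : A⁻¹.PosDef := hPD.inv
  have h1 : 0 < (1 : Fin N → ℝ) ⬝ᵥ A⁻¹.mulVec 1 := by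
    have := hinvPD.dotProduct_mulVec_pos hone
    simpa using this
  refine ⟨hPD, h1, fun ξ hξ => ?_⟩
  set v : Fin N → ℝ := A⁻¹.mulVec 1 with hv
  set S : ℝ := (1 : Fin N → ℝ) ⬝ᵥ v with hS
  set c : ℝ := Q / S with hc
  have hAv : A *ᵥ v = 1 := by
    rw [hv, Matrix.mulVec_mulVec, Matrix.mul_nonsing_inv _ hPD.det_pos.ne'.isUnit,
      Matrix.one_mulVec]
  have hsum : (1 : Fin N → ℝ) ⬝ᵥ ξ = Q := by
    rw [hξ, dotProduct_smul, smul_eq_mul, ← hS, hc, div_mul_cancel₀ _ (ne_of_gt h1)]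
  refine ⟨hsum, fun x hx hne => ?_, fun i => ?_⟩
  · set d : Fin N → ℝ := x - ξ with hd
    have hd0 : d ≠ 0 := sub_ne_zero.2 hne
    have hAξ : A *ᵥ ξ = c • (1 : Fin N → ℝ) := by
      rw [hξ, Matrix.mulVec_smul, hAv]
    have hdsum : (1 : Fin N → ℝ) ⬝ᵥ d = 0 := by
      rw [hd, dotProduct_sub, hx, hsum, sub_self]
    have cross1 : d ⬝ᵥ (A *ᵥ ξ) = 0 := by
      rw [hAξ, dotProduct_smul, smul_eq_mul, dotProduct_comm, hdsum, mul_zero]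
    have cross2 : ξ ⬝ᵥ (A *ᵥ d) = 0 := by
      rw [Matrix.dotProduct_mulVec, ← Matrix.mulVec_transpose, hsymm.eq, hAξ,
        smul_dotProduct, smul_eq_mul, hdsum, mul_zero]
    have hquad : 0 < d ⬝ᵥ (A *ᵥ d) := by
      have := hPD.dotProduct_mulVec_pos hd0
      simpa using this
    have hxd : x = ξ + d := by rw [hd]; abel
    have hexp : x ⬝ᵥ (A *ᵥ x) = ξ ⬝ᵥ (A *ᵥ ξ) + d ⬝ᵥ (A *ᵥ d) := by
      rw [hxd, Matrix.mulVec_add, dotProduct_add, add_dotProduct, add_dotProduct]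
      rw [show ξ ⬝ᵥ (A *ᵥ d) = 0 from cross2, show d ⬝ᵥ (A *ᵥ ξ) = 0 from cross1]
      ring
    rw [hexp]
    linarith
  · rw [hξ]
    have hvi : 0 ≤ v i := inv_one_nonneg hN hsymm hB i
    have hc0 : 0 ≤ c := div_nonneg hQ h1.le
    simpa using mul_nonneg hc0 hvi
end

section
/- Every symmetric N×N real matrix that is a B-matrix is positive definite. -/
open Matrix Finset

/-!
Let `c i` be the mean of row `i` and `K i j = min (c i) (c j)`. Since `K - A` is symmetric,
`xᵀ (K - A) x = ∑ᵢ ρᵢ xᵢ² - ½ ∑ᵢⱼ (K - A)ᵢⱼ (xᵢ - xⱼ)²`, where the row sums `ρᵢ` of `K - A` are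
nonpositive because `∑ⱼ min (c i) (c j) ≤ N c i`. The min kernel `K` is positive semidefinite, so
`xᵀ A x ≥ ½ ∑ᵢⱼ (K - A)ᵢⱼ (xᵢ - xⱼ)²`, and the B-matrix condition says exactly that the
off-diagonal weights `(K - A)ᵢⱼ` are positive. Hence `xᵀ A x > 0` unless `x` is constant, and for
a constant `x ≠ 0` the form is `x₀² ∑ᵢⱼ Aᵢⱼ > 0`.
-/

theorem sum_sum_min_mul_mul_nonneg {ι : Type*} [DecidableEq ι] (s : Finset ι) {c : ι → ℝ}
    (hc : ∀ i ∈ s, 0 ≤ c i) (x : ι → ℝ) :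
    0 ≤ ∑ i ∈ s, ∑ j ∈ s, min (c i) (c j) * (x i * x j) := by
  induction s using Finset.strongInduction generalizing c with
  | _ s ih =>
  rcases s.eq_empty_or_nonempty with rfl | hne
  · simp
  obtain ⟨i₀, hi₀, hmin⟩ := s.exists_min_image c hne
  set c' : ι → ℝ := fun i => c i - c i₀
  have hc' : ∀ i ∈ s, 0 ≤ c' i := fun i hi => sub_nonneg.2 (hmin i hi)
  -- Peel off the constant kernel `c i₀`; what remains vanishes on the row and column of `i₀`.
  have hsplit : ∑ i ∈ s, ∑ j ∈ s, min (c i) (c j) * (x i * x j)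
      = c i₀ * (∑ i ∈ s, x i) ^ 2 + ∑ i ∈ s, ∑ j ∈ s, min (c' i) (c' j) * (x i * x j) := by
    have hmin' : ∀ i j, min (c i) (c j) = c i₀ + min (c' i) (c' j) := fun i j => by
      rw [min_sub_sub_right]; ring
    simp_rw [hmin', add_mul, sum_add_distrib, sq, sum_mul_sum, mul_sum]
  have hrow : ∀ j ∈ s, min (c' i₀) (c' j) = 0 := fun j hj => by
    simpa [c'] using hc' j hj
  have herase : ∑ i ∈ s, ∑ j ∈ s, min (c' i) (c' j) * (x i * x j)
      = ∑ i ∈ s.erase i₀, ∑ j ∈ s.erase i₀, min (c' i) (c' j) * (x i * x j) := by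
    rw [← sum_erase s (sum_eq_zero fun j hj => by rw [hrow j hj, zero_mul])]
    refine sum_congr rfl fun i hi => (sum_erase s ?_).symm
    rw [min_comm, hrow i (mem_of_mem_erase hi), zero_mul]
  have hrest := ih _ (erase_ssubset hi₀) (fun i hi => hc' i (mem_of_mem_erase hi))
  rw [hsplit, herase]
  have := hc i₀ hi₀
  positivity

section QuadraticForms

variable {ι : Type*} [Fintype ι]

theorem Matrix.dotProduct_mulVec_self_eq_sum_sum (A : Matrix ι ι ℝ) (x : ι → ℝ) :
    x ⬝ᵥ A *ᵥ x = ∑ i, ∑ j, A i j * (x i * x j) := by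
  simp only [dotProduct, mulVec, mul_sum]
  exact sum_congr rfl fun i _ => sum_congr rfl fun j _ => by ring

theorem Matrix.IsSymm.sum_sum_mul_mul_eq {B : Matrix ι ι ℝ} (hB : B.IsSymm) (x : ι → ℝ) :
    ∑ i, ∑ j, B i j * (x i * x j)
      = ∑ i, (∑ j, B i j) * x i ^ 2 - (∑ i, ∑ j, B i j * (x i - x j) ^ 2) / 2 := by
  have hswap : ∑ i, ∑ j, B i j * x j ^ 2 = ∑ i, ∑ j, B i j * x i ^ 2 := by
    rw [sum_comm]
    exact sum_congr rfl fun i _ => sum_congr rfl fun j _ => by rw [hB.apply]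
  have hexpand : ∀ i j, B i j * (x i - x j) ^ 2
      = B i j * x i ^ 2 + B i j * x j ^ 2 - 2 * (B i j * (x i * x j)) := fun i j => by ring
  simp_rw [hexpand, sum_sub_distrib, sum_add_distrib, hswap, ← mul_sum, sum_mul]
  ring

theorem Matrix.IsSymm.sum_sq_sub_le_sum_sum_mul_mul {A : Matrix ι ι ℝ} (hA : A.IsSymm)
    {c : ι → ℝ} (hc : ∀ i, 0 ≤ c i) (hrow : ∀ i, ∑ j, min (c i) (c j) ≤ ∑ j, A i j)
    (x : ι → ℝ) :
    (∑ i, ∑ j, (min (c i) (c j) - A i j) * (x i - x j) ^ 2) / 2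
      ≤ ∑ i, ∑ j, A i j * (x i * x j) := by
  classical
  set B : Matrix ι ι ℝ := of fun i j => min (c i) (c j) - A i j
  have hB : B.IsSymm := ext fun i j => by simp [B, min_comm, hA.apply]
  have hK := sum_sum_min_mul_mul_nonneg univ (fun i _ => hc i) x
  have hBrow : ∑ i, (∑ j, B i j) * x i ^ 2 ≤ 0 :=
    sum_nonpos fun i _ => mul_nonpos_of_nonpos_of_nonneg
      (by simpa [B, sum_sub_distrib] using hrow i) (sq_nonneg _)
  have hdecomp : ∑ i, ∑ j, A i j * (x i * x j)
      = ∑ i, ∑ j, min (c i) (c j) * (x i * x j) - ∑ i, ∑ j, B i j * (x i * x j) := by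
    simp [B, sub_mul, sum_sub_distrib]
  have hid := hB.sum_sum_mul_mul_eq x
  simp only [B, of_apply] at hid hBrow hdecomp
  linarith

end QuadraticForms

noncomputable def Matrix.rowMean {N : ℕ} (A : Matrix (Fin N) (Fin N) ℝ) (i : Fin N) : ℝ :=
  (∑ k, A i k) / N

theorem Matrix.sum_min_rowMean_le_sum {N : ℕ} (A : Matrix (Fin N) (Fin N) ℝ) (i : Fin N) :
    ∑ j, min (A.rowMean i) (A.rowMean j) ≤ ∑ j, A i j := by
  have hN : (N : ℝ) ≠ 0 := Nat.cast_ne_zero.2 (Fin.pos i).ne'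
  calc ∑ j, min (A.rowMean i) (A.rowMean j) ≤ ∑ _j : Fin N, A.rowMean i :=
        sum_le_sum fun j _ => min_le_left _ _
    _ = ∑ j, A i j := by simp [rowMean, field]

namespace IsBMatrix

variable {N : ℕ} {A : Matrix (Fin N) (Fin N) ℝ}

theorem rowMean_pos (hB : IsBMatrix A) (i : Fin N) : 0 < A.rowMean i :=
  div_pos (hB i).1 (Nat.cast_pos.2 (Fin.pos i))

theorem lt_min_rowMean (hsymm : A.IsSymm) (hB : IsBMatrix A) {i j : Fin N} (hij : i ≠ j) :
    A i j < min (A.rowMean i) (A.rowMean j) :=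
  lt_min ((hB i).2 j hij.symm) (hsymm.apply i j ▸ (hB j).2 i hij)

theorem sum_sum_mul_mul_pos (hsymm : A.IsSymm) (hB : IsBMatrix A) {x : Fin N → ℝ}
    (hx : x ≠ 0) : 0 < ∑ i, ∑ j, A i j * (x i * x j) := by
  obtain ⟨i₀, hi₀⟩ := Function.ne_iff.mp hx
  by_cases hconst : ∀ i, x i = x i₀
  · have hsum : ∑ i, ∑ j, A i j * (x i * x j) = (∑ i, ∑ j, A i j) * x i₀ ^ 2 := by
      simp [hconst, sum_mul, sq]
    have htotal : 0 < ∑ i, ∑ j, A i j := sum_pos (fun i _ => (hB i).1) ⟨i₀, mem_univ _⟩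
    rw [hsum]
    exact mul_pos htotal (sq_pos_of_ne_zero hi₀)
  push Not at hconst
  obtain ⟨a, ha⟩ := hconst
  have hai₀ : a ≠ i₀ := fun h => ha (h ▸ rfl)
  have hweight : ∀ i j, 0 ≤ (min (A.rowMean i) (A.rowMean j) - A i j) * (x i - x j) ^ 2 := by
    intro i j
    rcases eq_or_ne i j with rfl | hij
    · simp
    · exact mul_nonneg (sub_nonneg.2 (hB.lt_min_rowMean hsymm hij).le) (sq_nonneg _)
  have hgap : 0 < ∑ i, ∑ j, (min (A.rowMean i) (A.rowMean j) - A i j) * (x i - x j) ^ 2 :=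
    sum_pos' (fun i _ => sum_nonneg fun j _ => hweight i j)
      ⟨a, mem_univ _, sum_pos' (fun j _ => hweight a j) ⟨i₀, mem_univ _,
        mul_pos (sub_pos.2 (hB.lt_min_rowMean hsymm hai₀)) (sq_pos_of_ne_zero (sub_ne_zero.2 ha))⟩⟩
  have hbound := hsymm.sum_sq_sub_le_sum_sum_mul_mul (fun i => (hB.rowMean_pos i).le)
    A.sum_min_rowMean_le_sum x
  linarith

end IsBMatrix

/-- Every symmetric real B-matrix is positive definite. -/
theorem stmt7 (N : ℕ) (A : Matrix (Fin N) (Fin N) ℝ)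
    (hsymm : A.IsSymm) (hB : IsBMatrix A) :
    A.PosDef := by
  refine posDef_iff_dotProduct_mulVec.mpr ⟨isHermitian_iff_isSymm.mpr hsymm, fun x hx => ?_⟩
  rw [star_trivial, dotProduct_mulVec_self_eq_sum_sum]
  exact hB.sum_sum_mul_mul_pos hsymm hx
end

section
/- Let A be an invertible N×N real matrix such that its transpose Aᵀ is a B-matrix. Then every component of the vector A⁻¹·1, where 1 is the all-ones vector, is nonnegative. -/
open Matrix Finset

/-!
Write `x = A⁻¹ 1`, so `xᵀ B = 1ᵀ` for the B-matrix `B = Aᵀ`. Subtracting from each row of `B`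
its mean gives a matrix `Z` with zero row sums and negative off-diagonal entries, and
`xᵀ Z = 0` because `xᵀ B 1 = N`. For such `Z`, testing `xᵀ Z = 0` against the indicator of
`S = {x < 0}` shows that `S` is empty or everything; the second option contradicts
`xᵀ B 1 = N ≥ 0`, since `B` has positive row sums.
-/

section ZeroRowSum

variable {ι : Type*} {Z : Matrix ι ι ℝ}

lemma sum_entries_neg_of_notMem (hoff : ∀ j k, j ≠ k → Z j k < 0) {S : Finset ι} {j : ι}
    (hj : j ∉ S) (hS : S.Nonempty) : ∑ k ∈ S, Z j k < 0 :=
  Finset.sum_neg (fun k hk => hoff j k fun h => hj (h ▸ hk)) hS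

lemma sum_entries_pos_of_mem [Fintype ι] [DecidableEq ι] (hoff : ∀ j k, j ≠ k → Z j k < 0)
    (hrow : ∀ j, ∑ k, Z j k = 0) {S : Finset ι} {j : ι} (hj : j ∈ S) (hS : Sᶜ.Nonempty) :
    0 < ∑ k ∈ S, Z j k := by
  have hcompl := sum_entries_neg_of_notMem hoff (Finset.notMem_compl.mpr hj) hS
  linarith [Finset.sum_compl_add_sum S (Z j), hrow j]

lemma neg_of_vecMul_eq_zero_of_neg [Fintype ι] [DecidableEq ι] (hoff : ∀ j k, j ≠ k → Z j k < 0)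
    (hrow : ∀ j, ∑ k, Z j k = 0) {x : ι → ℝ} (hx : x ᵥ* Z = 0) {i : ι} (hi : x i < 0)
    (j : ι) : x j < 0 := by
  by_contra! hj
  set S := Finset.univ.filter fun k => x k < 0
  have hSc : Sᶜ.Nonempty := ⟨j, by simpa [S] using hj⟩
  have hterm (l : ι) : x l * ∑ k ∈ S, Z l k ≤ 0 := by
    by_cases hl : x l < 0
    · exact (mul_neg_of_neg_of_pos hl
        (sum_entries_pos_of_mem hoff hrow (by simpa [S] using hl) hSc)).le
    · exact mul_nonpos_of_nonneg_of_nonpos (not_lt.mp hl) (sum_entries_neg_of_notMem hoff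
        (by simpa [S] using hl) ⟨i, by simpa [S] using hi⟩).le
  have hterm_i : x i * ∑ k ∈ S, Z i k < 0 :=
    mul_neg_of_neg_of_pos hi (sum_entries_pos_of_mem hoff hrow (by simpa [S] using hi) hSc)
  have htotal : ∑ l, x l * ∑ k ∈ S, Z l k = 0 := by
    simp_rw [Finset.mul_sum]
    rw [Finset.sum_comm]
    exact Finset.sum_eq_zero fun k _ => by simpa [vecMul, dotProduct] using congrFun hx k
  have := Finset.sum_lt_sum (fun l _ => hterm l) ⟨i, Finset.mem_univ i, hterm_i⟩
  simp only [htotal, Finset.sum_const_zero, lt_self_iff_false] at this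

end ZeroRowSum

lemma IsBMatrix.nonneg_of_vecMul_eq_one {N : ℕ} {B : Matrix (Fin N) (Fin N) ℝ}
    (hB : IsBMatrix B) {x : Fin N → ℝ} (hx : x ᵥ* B = 1) (i : Fin N) : 0 ≤ x i := by
  by_contra! hi
  have hN : (N : ℝ) ≠ 0 := by exact_mod_cast i.pos.ne'
  set r := B *ᵥ 1
  have hxr : x ⬝ᵥ r = N := by simp [r, dotProduct_mulVec, hx]
  set Z : Matrix (Fin N) (Fin N) ℝ := of fun j k => B j k - r j / N
  have hoff (j k : Fin N) (hjk : j ≠ k) : Z j k < 0 := by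
    simpa [Z, r, mulVec, dotProduct] using (hB j).2 k hjk.symm
  have hrow (j : Fin N) : ∑ k, Z j k = 0 := by
    simp [Z, Finset.sum_sub_distrib, mul_div_cancel₀ _ hN, r, mulVec, dotProduct]
  have hZ : x ᵥ* Z = 0 := by
    ext k
    have : ∑ j, x j * (r j / N) = 1 := by
      simp_rw [← mul_div_assoc, ← Finset.sum_div]
      exact div_eq_one_iff_eq hN |>.mpr hxr
    simpa [Z, vecMul, dotProduct, mul_sub, Finset.sum_sub_distrib, this, sub_eq_zero]
      using congrFun hx k
  have hneg := neg_of_vecMul_eq_zero_of_neg hoff hrow hZ hi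
  have hpos : x ⬝ᵥ r < 0 := Finset.sum_neg
    (fun j _ => mul_neg_of_neg_of_pos (hneg j) (by simpa [r, mulVec, dotProduct] using (hB j).1))
    ⟨i, Finset.mem_univ i⟩
  linarith [hxr ▸ hpos, (N.cast_nonneg : (0 : ℝ) ≤ N)]

/-- If `A` is invertible and `Aᵀ` is a B-matrix, then `A⁻¹ 1 ≥ 0`
componentwise, where `1` is the all-ones vector. -/
theorem stmt8 (N : ℕ) (A : Matrix (Fin N) (Fin N) ℝ)
    (hA : IsUnit A.det) (hB : IsBMatrix Aᵀ) :
    ∀ i, 0 ≤ A⁻¹.mulVec (1 : Fin N → ℝ) i := by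
  refine hB.nonneg_of_vecMul_eq_one ?_
  rw [vecMul_transpose, mulVec_mulVec, mul_nonsing_inv A hA, one_mulVec]
end

section
/- Fix T > 0. Let θ, η : [0,T] → ℝ be continuously differentiable with η(t) > 0 for all t. Let η̄ = min_{t∈[0,T]} η(t) and let θ̄ > 0 be a constant with θ̄ ≥ −θ'(t) for all t ∈ [0,T]; set γ = θ̄/(2η̄). If √γ·T < π, then for every continuously differentiable φ : [0,T] → ℝ with φ(0) = φ(T) = 0 and φ not identically zero, ∫₀ᵀ θ(t)φ(t)φ'(t) dt < ∫₀ᵀ η(t)·φ'(t)² dt. -/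
/-!
Integrating by parts, `∫ θ φ φ' = -½ ∫ θ' φ² ≤ (θ̄ / 2) ∫ φ²`, while
`∫ η φ'² ≥ η̄ ∫ φ'² ≥ η̄ (π / T)² ∫ φ²` by the Poincaré inequality. The hypothesis `√γ T < π` says
exactly `θ̄ / 2 < η̄ (π / T)²`, and `∫ φ² > 0`, so the inequality is strict.

The Poincaré inequality comes from a Riccati trick: if `ψ' = -(ω² + ψ²)` on `[a, b]`, then
integrating `2 ψ φ φ'` by parts gives `0 ≤ ∫ (φ' - ψ φ)² = ∫ φ'² - ω² ∫ φ²`. For `ω (b - a) < π`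
a suitable shift of `ω cot (ω t)` solves this equation, and letting `ω → π / (b - a)` gives the
sharp constant.
-/

open Set MeasureTheory Real Topology

section Dirichlet

variable {a b : ℝ} {φ φ' : ℝ → ℝ}

theorem integral_mul_mul_deriv_eq_of_eq_zero (hab : a ≤ b) {u u' : ℝ → ℝ}
    (hu : ∀ t ∈ Icc a b, HasDerivAt u (u' t) t) (hu' : ContinuousOn u' (Icc a b))
    (hφ : ∀ t ∈ Icc a b, HasDerivAt φ (φ' t) t) (hφ' : ContinuousOn φ' (Icc a b))
    (ha : φ a = 0) (hb : φ b = 0) :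
    ∫ t in a..b, u t * (φ t * φ' t) = -(∫ t in a..b, u' t * φ t ^ 2) / 2 := by
  have hφc : ContinuousOn φ (Icc a b) := fun t ht => (hφ t ht).continuousAt.continuousWithinAt
  have hsq : ∀ t ∈ uIcc a b, HasDerivAt (fun s => φ s ^ 2 / 2) (φ t * φ' t) t := fun t ht => by
    rw [uIcc_of_le hab] at ht
    exact (((hφ t ht).pow 2).div_const 2).congr_deriv (by ring)
  rw [intervalIntegral.integral_mul_deriv_eq_deriv_mul (fun t ht => hu t (uIcc_of_le hab ▸ ht))
    hsq (hu'.intervalIntegrable_of_Icc hab) ((hφc.mul hφ').intervalIntegrable_of_Icc hab)]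
  simp only [ha, hb, mul_div_assoc', intervalIntegral.integral_div]
  ring

theorem mul_integral_sq_le_integral_deriv_sq_of_riccati (hab : a ≤ b) {c : ℝ} {ψ : ℝ → ℝ}
    (hψ : ∀ t ∈ Icc a b, HasDerivAt ψ (-(c + ψ t ^ 2)) t)
    (hφ : ∀ t ∈ Icc a b, HasDerivAt φ (φ' t) t) (hφ' : ContinuousOn φ' (Icc a b))
    (ha : φ a = 0) (hb : φ b = 0) :
    c * ∫ t in a..b, φ t ^ 2 ≤ ∫ t in a..b, φ' t ^ 2 := by
  have hφc : ContinuousOn φ (Icc a b) := fun t ht => (hφ t ht).continuousAt.continuousWithinAt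
  have hψc : ContinuousOn ψ (Icc a b) := fun t ht => (hψ t ht).continuousAt.continuousWithinAt
  have hφ2 : IntervalIntegrable (fun t => φ t ^ 2) volume a b :=
    (hφc.pow 2).intervalIntegrable_of_Icc hab
  have hφ'2 : IntervalIntegrable (fun t => φ' t ^ 2) volume a b :=
    (hφ'.pow 2).intervalIntegrable_of_Icc hab
  have hψφ2 : IntervalIntegrable (fun t => ψ t ^ 2 * φ t ^ 2) volume a b :=
    ((hψc.pow 2).mul (hφc.pow 2)).intervalIntegrable_of_Icc hab
  have hψφφ' : IntervalIntegrable (fun t => ψ t * (φ t * φ' t)) volume a b :=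
    (hψc.mul (hφc.mul hφ')).intervalIntegrable_of_Icc hab
  have hibp : 2 * ∫ t in a..b, ψ t * (φ t * φ' t) =
      c * (∫ t in a..b, φ t ^ 2) + ∫ t in a..b, ψ t ^ 2 * φ t ^ 2 := by
    rw [integral_mul_mul_deriv_eq_of_eq_zero hab hψ (continuousOn_const.add (hψc.pow 2)).neg hφ
      hφ' ha hb, ← intervalIntegral.integral_const_mul,
      ← intervalIntegral.integral_add (hφ2.const_mul c) hψφ2]
    simp only [neg_mul, intervalIntegral.integral_neg, add_mul]
    ring
  have hsplit : ∫ t in a..b, (φ' t - ψ t * φ t) ^ 2 = (∫ t in a..b, φ' t ^ 2) -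
      2 * (∫ t in a..b, ψ t * (φ t * φ' t)) + ∫ t in a..b, ψ t ^ 2 * φ t ^ 2 := by
    rw [← intervalIntegral.integral_const_mul,
      ← intervalIntegral.integral_sub hφ'2 (hψφφ'.const_mul 2),
      ← intervalIntegral.integral_add (hφ'2.sub (hψφφ'.const_mul 2)) hψφ2]
    exact intervalIntegral.integral_congr fun t _ => by ring
  have hnonneg : 0 ≤ ∫ t in a..b, (φ' t - ψ t * φ t) ^ 2 :=
    intervalIntegral.integral_nonneg hab fun t _ => sq_nonneg _
  linarith

theorem integral_mul_mul_deriv_le_of_eq_zero (hab : a ≤ b) {θ θ' : ℝ → ℝ} {M : ℝ}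
    (hθ : ∀ t ∈ Icc a b, HasDerivAt θ (θ' t) t) (hθ' : ContinuousOn θ' (Icc a b))
    (hθM : ∀ t ∈ Icc a b, -θ' t ≤ M)
    (hφ : ∀ t ∈ Icc a b, HasDerivAt φ (φ' t) t) (hφ' : ContinuousOn φ' (Icc a b))
    (ha : φ a = 0) (hb : φ b = 0) :
    ∫ t in a..b, θ t * φ t * φ' t ≤ M / 2 * ∫ t in a..b, φ t ^ 2 := by
  have hφc : ContinuousOn φ (Icc a b) := fun t ht => (hφ t ht).continuousAt.continuousWithinAt
  have hmono : ∫ t in a..b, -M * φ t ^ 2 ≤ ∫ t in a..b, θ' t * φ t ^ 2 :=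
    intervalIntegral.integral_mono_on hab
      ((continuousOn_const.mul (hφc.pow 2)).intervalIntegrable_of_Icc hab)
      ((hθ'.mul (hφc.pow 2)).intervalIntegrable_of_Icc hab)
      fun t ht => mul_le_mul_of_nonneg_right (by linarith [hθM t ht]) (sq_nonneg _)
  rw [intervalIntegral.integral_const_mul] at hmono
  simp_rw [mul_assoc]
  rw [integral_mul_mul_deriv_eq_of_eq_zero hab hθ hθ' hφ hφ' ha hb]
  linarith

theorem exists_riccati_solution {ω : ℝ} (hω : 0 ≤ ω) (hωL : ω * (b - a) < π) :
    ∃ ψ : ℝ → ℝ, ∀ t ∈ Icc a b, HasDerivAt ψ (-(ω ^ 2 + ψ t ^ 2)) t := by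
  -- `ψ t = ω cot (ω (t - a) + δ)`, the shift `δ` keeping the argument of `cot` inside `(0, π)`.
  set δ := (π - ω * (b - a)) / 2 with hδ
  have hsin : ∀ t ∈ Icc a b, 0 < sin (ω * (t - a) + δ) := fun t ht => by
    have h₁ : 0 ≤ ω * (t - a) := mul_nonneg hω (by linarith [ht.1])
    have h₂ : ω * (t - a) ≤ ω * (b - a) := mul_le_mul_of_nonneg_left (by linarith [ht.2]) hω
    exact sin_pos_of_pos_of_lt_pi (by linarith) (by linarith)
  refine ⟨fun t => ω * cos (ω * (t - a) + δ) / sin (ω * (t - a) + δ), fun t ht => ?_⟩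
  have hs : HasDerivAt (fun t => ω * (t - a) + δ) ω t := by
    simpa using ((hasDerivAt_id t).sub_const a).const_mul ω |>.add_const δ
  have hquot := (((hasDerivAt_cos _).comp t hs).const_mul ω).div
    ((hasDerivAt_sin _).comp t hs) (hsin t ht).ne'
  refine hquot.congr_deriv ?_
  have hne := (hsin t ht).ne'
  simp only [Function.comp_apply]
  field_simp
  ring

theorem sq_mul_integral_sq_le_integral_deriv_sq (hab : a ≤ b) {ω : ℝ} (hω : 0 ≤ ω)
    (hωL : ω * (b - a) < π)
    (hφ : ∀ t ∈ Icc a b, HasDerivAt φ (φ' t) t) (hφ' : ContinuousOn φ' (Icc a b))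
    (ha : φ a = 0) (hb : φ b = 0) :
    ω ^ 2 * ∫ t in a..b, φ t ^ 2 ≤ ∫ t in a..b, φ' t ^ 2 :=
  let ⟨_, hψ⟩ := exists_riccati_solution hω hωL
  mul_integral_sq_le_integral_deriv_sq_of_riccati hab hψ hφ hφ' ha hb

theorem pi_div_sq_mul_integral_sq_le_integral_deriv_sq (hab : a < b)
    (hφ : ∀ t ∈ Icc a b, HasDerivAt φ (φ' t) t) (hφ' : ContinuousOn φ' (Icc a b))
    (ha : φ a = 0) (hb : φ b = 0) :
    (π / (b - a)) ^ 2 * ∫ t in a..b, φ t ^ 2 ≤ ∫ t in a..b, φ' t ^ 2 := by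
  have hL : 0 < b - a := sub_pos.2 hab
  have hcont : Continuous fun ω : ℝ => ω ^ 2 * ∫ t in a..b, φ t ^ 2 := by fun_prop
  refine le_of_tendsto (x := 𝓝[<] (π / (b - a)))
    ((hcont.tendsto _).mono_left nhdsWithin_le_nhds) ?_
  filter_upwards [Ioo_mem_nhdsLT (div_pos pi_pos hL)] with ω hω
  exact sq_mul_integral_sq_le_integral_deriv_sq hab.le hω.1.le ((lt_div_iff₀ hL).1 hω.2)
    hφ hφ' ha hb

end Dirichlet

theorem stmt12_general (T : ℝ) (hT : 0 < T)
    (θ η θ' η' : ℝ → ℝ)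
    (hθ : ∀ t ∈ Set.Icc 0 T, HasDerivAt θ (θ' t) t)
    (hθ'c : ContinuousOn θ' (Set.Icc 0 T))
    (hη : ∀ t ∈ Set.Icc 0 T, HasDerivAt η (η' t) t)
    (hηpos : ∀ t ∈ Set.Icc 0 T, 0 < η t)
    (ηbar θbar : ℝ)
    (hηbar : IsLeast (η '' Set.Icc 0 T) ηbar)
    (hθbar' : ∀ t ∈ Set.Icc 0 T, -θ' t ≤ θbar)
    (hγ : Real.sqrt (θbar / (2 * ηbar)) * T < Real.pi)
    (φ φ' : ℝ → ℝ)
    (hφ : ∀ t ∈ Set.Icc 0 T, HasDerivAt φ (φ' t) t)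
    (hφ'c : ContinuousOn φ' (Set.Icc 0 T))
    (hφ0 : φ 0 = 0) (hφT : φ T = 0)
    (hφne : ∃ t ∈ Set.Icc 0 T, φ t ≠ 0) :
    (∫ t in (0:ℝ)..T, θ t * φ t * φ' t) < ∫ t in (0:ℝ)..T, η t * (φ' t) ^ 2 := by
  obtain ⟨⟨t₀, ht₀, rfl⟩, hηmin⟩ := hηbar
  have hη₀ := hηpos t₀ ht₀
  have hφc : ContinuousOn φ (Icc 0 T) := fun t ht => (hφ t ht).continuousAt.continuousWithinAt
  have hηc : ContinuousOn η (Icc 0 T) := fun t ht => (hη t ht).continuousAt.continuousWithinAt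
  have hφ2_pos : 0 < ∫ t in (0:ℝ)..T, φ t ^ 2 :=
    let ⟨t, ht, hφt⟩ := hφne
    intervalIntegral.integral_pos hT (hφc.pow 2) (fun _ _ => sq_nonneg _) ⟨t, ht, by positivity⟩
  have hθbar_lt : θbar / 2 < η t₀ * (π / T) ^ 2 := by
    have := (sqrt_lt' (by positivity)).1 ((lt_div_iff₀ hT).2 hγ)
    rw [div_lt_iff₀ (by positivity)] at this
    linarith
  have hpoincare := pi_div_sq_mul_integral_sq_le_integral_deriv_sq hT hφ hφ'c hφ0 hφT
  rw [sub_zero] at hpoincare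
  have hη_mono : ∫ t in (0:ℝ)..T, η t₀ * φ' t ^ 2 ≤ ∫ t in (0:ℝ)..T, η t * φ' t ^ 2 :=
    intervalIntegral.integral_mono_on hT.le
      ((continuousOn_const.mul (hφ'c.pow 2)).intervalIntegrable_of_Icc hT.le)
      ((hηc.mul (hφ'c.pow 2)).intervalIntegrable_of_Icc hT.le)
      fun t ht => mul_le_mul_of_nonneg_right (hηmin ⟨t, ht, rfl⟩) (sq_nonneg _)
  calc ∫ t in (0:ℝ)..T, θ t * φ t * φ' t
      ≤ θbar / 2 * ∫ t in (0:ℝ)..T, φ t ^ 2 :=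
        integral_mul_mul_deriv_le_of_eq_zero hT.le hθ hθ'c hθbar' hφ hφ'c hφ0 hφT
    _ < η t₀ * ((π / T) ^ 2 * ∫ t in (0:ℝ)..T, φ t ^ 2) := by
        rw [← mul_assoc]; gcongr
    _ ≤ η t₀ * ∫ t in (0:ℝ)..T, φ' t ^ 2 := by gcongr
    _ ≤ ∫ t in (0:ℝ)..T, η t * φ' t ^ 2 := by
        rwa [intervalIntegral.integral_const_mul] at hη_mono

/-- Let `η̄ = min η` on `[0,T]`, `θ̄ > 0` with `θ̄ ≥ −θ'` on `[0,T]`, and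
`γ = θ̄/(2η̄)`. If `√γ · T < π`, then for every continuously differentiable `φ` vanishing at
`0` and `T` and not identically zero, `∫₀ᵀ θ φ φ' < ∫₀ᵀ η (φ')²`. -/
theorem stmt12 (T : ℝ) (hT : 0 < T)
    (θ η θ' η' : ℝ → ℝ)
    (hθ : ∀ t ∈ Set.Icc 0 T, HasDerivAt θ (θ' t) t)
    (hθ'c : ContinuousOn θ' (Set.Icc 0 T))
    (hη : ∀ t ∈ Set.Icc 0 T, HasDerivAt η (η' t) t)
    (hη'c : ContinuousOn η' (Set.Icc 0 T))
    (hηpos : ∀ t ∈ Set.Icc 0 T, 0 < η t)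
    (ηbar θbar : ℝ)
    (hηbar : IsLeast (η '' Set.Icc 0 T) ηbar)
    (hθbar : 0 < θbar)
    (hθbar' : ∀ t ∈ Set.Icc 0 T, -θ' t ≤ θbar)
    (hγ : Real.sqrt (θbar / (2 * ηbar)) * T < Real.pi)
    (φ φ' : ℝ → ℝ)
    (hφ : ∀ t ∈ Set.Icc 0 T, HasDerivAt φ (φ' t) t)
    (hφ'c : ContinuousOn φ' (Set.Icc 0 T))
    (hφ0 : φ 0 = 0) (hφT : φ T = 0)
    (hφne : ∃ t ∈ Set.Icc 0 T, φ t ≠ 0) :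
    (∫ t in (0:ℝ)..T, θ t * φ t * φ' t) < ∫ t in (0:ℝ)..T, η t * (φ' t) ^ 2 :=
  stmt12_general T hT θ η θ' η' hθ hθ'c hη hηpos ηbar θbar hηbar hθbar' hγ φ φ' hφ hφ'c hφ0 hφT hφne
end

section
/- Fix T > 0 and Q ≥ 0. Let θ, η : [0,T] → ℝ be continuously differentiable with η(t) > 0 for all t. Let η̄ = min_{t∈[0,T]} η(t) and let θ̄ > 0 be a constant with θ̄ ≥ −θ'(t) for all t ∈ [0,T]; set γ = θ̄/(2η̄) and assume √γ·T < π. If ζ : [0,T] → ℝ is twice continuously differentiable and satisfies 2η(t)ζ''(t) + 2η'(t)ζ'(t) − θ'(t)ζ(t) = 0 for all t ∈ [0,T], ζ(0) = Q, and ζ(T) = 0, then ζ(t) ≥ 0 for all t ∈ [0,T]. -/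
/-!
If `ζ` were negative somewhere, it would be negative on an interval `(a, b) ⊆ [0, T]` with
`ζ a = ζ b = 0`. Picone's argument compares `ζ` with `y = cos (σ (t - (a + b) / 2))`, which is
positive on `[a, b]` as soon as `σ (b - a) < π`, and `√γ (b - a) < π` leaves room to pick such a
`σ` with `θ̄ < 2 η̄ σ²`. With `R = y' / y`, a solution of `R' = -(σ² + R²)`, the function
`E = 2 η ζ' ζ - 2 η̄ R ζ²` vanishes at `a` and `b`, while its derivative
`(θ' + 2 η̄ σ²) ζ² + 2 (η - η̄) ζ'² + 2 η̄ (ζ' - R ζ)²` is positive wherever `ζ ≠ 0`.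
-/

open Set Real

lemma hasDerivAt_neg_mul_tan {σ c t : ℝ} (hcos : cos (σ * (t - c)) ≠ 0) :
    HasDerivAt (fun s => -σ * tan (σ * (s - c)))
      (-(σ ^ 2 + (-σ * tan (σ * (t - c))) ^ 2)) t := by
  have hlin : HasDerivAt (fun s => σ * (s - c)) σ t := by
    simpa using ((hasDerivAt_id t).sub_const c).const_mul σ
  refine (((hasDerivAt_tan hcos).comp t hlin).const_mul (-σ)).congr_deriv ?_
  rw [tan_eq_sin_div_cos]
  field_simp
  rw [sin_sq]
  ring

lemma exists_pos_lt_sq_and_mul_lt_pi {γ L : ℝ} (hL : 0 < L) (h : √γ * L < π) :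
    ∃ σ, 0 < σ ∧ γ < σ ^ 2 ∧ σ * L < π := by
  have hlt : √γ < π / L := (lt_div_iff₀ hL).2 h
  refine ⟨(√γ + π / L) / 2, by positivity, ?_, ?_⟩
  · exact (sqrt_lt' (by positivity)).1 (by linarith)
  · have : π / L * L = π := div_mul_cancel₀ π hL.ne'
    nlinarith

lemma exists_last_zero_before_neg {f : ℝ → ℝ} {u v : ℝ} (huv : u ≤ v)
    (hf : ContinuousOn f (Icc u v)) (hu : 0 ≤ f u) (hv : f v < 0) :
    ∃ a ∈ Ico u v, f a = 0 ∧ ∀ t ∈ Ioc a v, f t < 0 := by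
  have hzeros : IsCompact (Icc u v ∩ f ⁻¹' {0}) :=
    isCompact_Icc.of_isClosed_subset
      (hf.preimage_isClosed_of_isClosed isClosed_Icc isClosed_singleton) inter_subset_left
  obtain ⟨c, hc, hfc⟩ := intermediate_value_Icc' huv hf ⟨hv.le, hu⟩
  obtain ⟨a, ⟨ha, hfa⟩, hmax⟩ := hzeros.exists_isGreatest ⟨c, hc, hfc⟩
  have hav : a < v := ha.2.lt_of_ne (by rintro rfl; simp_all)
  refine ⟨a, ⟨ha.1, hav⟩, hfa, fun t ht => ?_⟩
  by_contra! hft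
  obtain ⟨d, hd, hfd⟩ := intermediate_value_Icc' ht.2
    (hf.mono (Icc_subset_Icc (ha.1.trans ht.1.le) le_rfl)) ⟨hv.le, hft⟩
  have := hmax ⟨⟨ha.1.trans (ht.1.le.trans hd.1), hd.2⟩, hfd⟩
  linarith [ht.1, hd.1]

lemma exists_first_zero_after_neg {f : ℝ → ℝ} {u v : ℝ} (huv : u ≤ v)
    (hf : ContinuousOn f (Icc u v)) (hu : f u < 0) (hv : 0 ≤ f v) :
    ∃ b ∈ Ioc u v, f b = 0 ∧ ∀ t ∈ Ico u b, f t < 0 := by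
  have hrefl : ContinuousOn (fun t => f (-t)) (Icc (-v) (-u)) :=
    hf.comp continuousOn_neg fun t ht => ⟨le_neg.1 ht.2, neg_le.1 ht.1⟩
  obtain ⟨a, ha, hfa, hneg⟩ := exists_last_zero_before_neg (neg_le_neg huv) hrefl
    (by simpa using hv) (by simpa using hu)
  refine ⟨-a, ⟨lt_neg.1 ha.2, neg_le.1 ha.1⟩, hfa, fun t ht => ?_⟩
  simpa using hneg (-t) ⟨lt_neg.1 ht.2, neg_le_neg ht.1⟩

lemma exists_zeros_bracketing_neg {f : ℝ → ℝ} {u v t₀ : ℝ} (ht₀ : t₀ ∈ Icc u v)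
    (hf : ContinuousOn f (Icc u v)) (hu : 0 ≤ f u) (hv : 0 ≤ f v) (hft₀ : f t₀ < 0) :
    ∃ a b, u ≤ a ∧ a < b ∧ b ≤ v ∧ f a = 0 ∧ f b = 0 ∧ ∀ t ∈ Ioo a b, f t < 0 := by
  obtain ⟨a, ha, hfa, hleft⟩ :=
    exists_last_zero_before_neg ht₀.1 (hf.mono (Icc_subset_Icc le_rfl ht₀.2)) hu hft₀
  obtain ⟨b, hb, hfb, hright⟩ :=
    exists_first_zero_after_neg ht₀.2 (hf.mono (Icc_subset_Icc ht₀.1 le_rfl)) hft₀ hv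
  refine ⟨a, b, ha.1, ha.2.trans hb.1, hb.2, hfa, hfb, fun t ht => ?_⟩
  rcases le_total t t₀ with htt₀ | htt₀
  · exact hleft t ⟨ht.1, htt₀⟩
  · exact hright t ⟨htt₀, ht.2⟩

lemma picone_deriv_pos {e m c σ q z z' R : ℝ} (hm : 0 ≤ m) (hme : m ≤ e) (hq : -q ≤ c)
    (hc : c < 2 * m * σ ^ 2) (hz : z ≠ 0) :
    0 < q * z * z + 2 * e * z' ^ 2 - 2 * m * (-(σ ^ 2 + R ^ 2) * z ^ 2 + R * (2 * z * z')) := by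
  have hsq : 0 < z ^ 2 := by positivity
  have hid : q * z * z + 2 * e * z' ^ 2 - 2 * m * (-(σ ^ 2 + R ^ 2) * z ^ 2 + R * (2 * z * z'))
      = (q + 2 * m * σ ^ 2) * z ^ 2 + 2 * (e - m) * z' ^ 2 + 2 * m * (z' - R * z) ^ 2 := by
    ring
  rw [hid]
  have h1 : 0 < (q + 2 * m * σ ^ 2) * z ^ 2 := mul_pos (by linarith) hsq
  have h2 : 0 ≤ 2 * (e - m) * z' ^ 2 := by have := sub_nonneg.2 hme; positivity
  have h3 : 0 ≤ 2 * m * (z' - R * z) ^ 2 := by positivity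
  linarith

section Picone

variable {η η' θ' ζ ζ' ζ'' : ℝ → ℝ} {a b m c : ℝ}

lemma hasDerivAt_picone {R : ℝ → ℝ} {R' t : ℝ} (hη : HasDerivAt η (η' t) t)
    (hζ : HasDerivAt ζ (ζ' t) t) (hζ' : HasDerivAt ζ' (ζ'' t) t) (hR : HasDerivAt R R' t) :
    HasDerivAt (fun s => 2 * η s * ζ' s * ζ s - 2 * m * R s * ζ s ^ 2)
      ((2 * η t * ζ'' t + 2 * η' t * ζ' t) * ζ t + 2 * η t * ζ' t ^ 2
        - 2 * m * (R' * ζ t ^ 2 + R t * (2 * ζ t * ζ' t))) t := by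
  have hsq : HasDerivAt (fun s => ζ s ^ 2) (2 * ζ t * ζ' t) t := by
    simpa using hζ.fun_pow 2
  refine ((((hη.const_mul 2).fun_mul hζ').fun_mul hζ).fun_sub
    ((hR.const_mul (2 * m)).fun_mul hsq)).congr_deriv ?_
  ring

theorem pi_le_sqrt_mul_sub_of_consecutive_zeros (hab : a < b)
    (hζa : ζ a = 0) (hζb : ζ b = 0) (hζne : ∀ t ∈ Ioo a b, ζ t ≠ 0)
    (hη : ∀ t ∈ Icc a b, HasDerivAt η (η' t) t)
    (hζ1 : ∀ t ∈ Icc a b, HasDerivAt ζ (ζ' t) t) (hζ2 : ∀ t ∈ Icc a b, HasDerivAt ζ' (ζ'' t) t)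
    (hODE : ∀ t ∈ Icc a b, 2 * η t * ζ'' t + 2 * η' t * ζ' t - θ' t * ζ t = 0)
    (hm : 0 < m) (hmη : ∀ t ∈ Icc a b, m ≤ η t) (hc : ∀ t ∈ Icc a b, -θ' t ≤ c) :
    π ≤ √(c / (2 * m)) * (b - a) := by
  by_contra! h
  obtain ⟨σ, hσ, hσc, hσL⟩ := exists_pos_lt_sq_and_mul_lt_pi (sub_pos.2 hab) h
  have hcσ : c < 2 * m * σ ^ 2 := by
    rwa [div_lt_iff₀ (by positivity), mul_comm] at hσc
  set R := fun s => -σ * tan (σ * (s - (a + b) / 2))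
  have hcos : ∀ t ∈ Icc a b, cos (σ * (t - (a + b) / 2)) ≠ 0 := by
    intro t ht
    refine (cos_pos_of_mem_Ioo ⟨?_, ?_⟩).ne' <;>
      nlinarith [mul_le_mul_of_nonneg_left ht.1 hσ.le, mul_le_mul_of_nonneg_left ht.2 hσ.le]
  have hE : ∀ t ∈ Icc a b,
      HasDerivAt (fun s => 2 * η s * ζ' s * ζ s - 2 * m * R s * ζ s ^ 2)
      ((2 * η t * ζ'' t + 2 * η' t * ζ' t) * ζ t + 2 * η t * ζ' t ^ 2
        - 2 * m * (-(σ ^ 2 + R t ^ 2) * ζ t ^ 2 + R t * (2 * ζ t * ζ' t))) t := fun t ht =>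
    hasDerivAt_picone (hη t ht) (hζ1 t ht) (hζ2 t ht) (hasDerivAt_neg_mul_tan (hcos t ht))
  have hmono := strictMonoOn_of_hasDerivWithinAt_pos (convex_Icc a b)
    (fun t ht => (hE t ht).continuousAt.continuousWithinAt)
    (fun t ht => (hE t (interior_subset ht)).hasDerivWithinAt) fun t ht => by
      rw [interior_Icc] at ht
      have ht' := Ioo_subset_Icc_self ht
      rw [show 2 * η t * ζ'' t + 2 * η' t * ζ' t = θ' t * ζ t by linarith [hODE t ht']]
      exact picone_deriv_pos hm.le (hmη t ht') (hc t ht') hcσ (hζne t ht)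
  simpa [hζa, hζb] using hmono (left_mem_Icc.2 hab.le) (right_mem_Icc.2 hab.le) hab

end Picone

theorem stmt14_general (T Q : ℝ) (hQ : 0 ≤ Q)
    (η θ' η' : ℝ → ℝ)
    (hη : ∀ t ∈ Set.Icc 0 T, HasDerivAt η (η' t) t)
    (hηpos : ∀ t ∈ Set.Icc 0 T, 0 < η t)
    (ηbar θbar : ℝ)
    (hηbar : IsLeast (η '' Set.Icc 0 T) ηbar)
    (hθbar' : ∀ t ∈ Set.Icc 0 T, -θ' t ≤ θbar)
    (hγ : Real.sqrt (θbar / (2 * ηbar)) * T < Real.pi)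
    (ζ ζ' ζ'' : ℝ → ℝ)
    (hζ1 : ∀ t ∈ Set.Icc 0 T, HasDerivAt ζ (ζ' t) t)
    (hζ2 : ∀ t ∈ Set.Icc 0 T, HasDerivAt ζ' (ζ'' t) t)
    (hODE : ∀ t ∈ Set.Icc 0 T, 2 * η t * ζ'' t + 2 * η' t * ζ' t - θ' t * ζ t = 0)
    (hζ0 : ζ 0 = Q) (hζT : ζ T = 0) :
    ∀ t ∈ Set.Icc 0 T, 0 ≤ ζ t := by
  obtain ⟨⟨t₁, ht₁, hηt₁⟩, hηlb⟩ := hηbar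
  intro t₀ ht₀
  by_contra! hζt₀
  obtain ⟨a, b, h0a, hab, hbT, hζa, hζb, hneg⟩ := exists_zeros_bracketing_neg ht₀
    (fun t ht => (hζ1 t ht).continuousAt.continuousWithinAt) (hζ0 ▸ hQ) hζT.ge hζt₀
  have hsub : Icc a b ⊆ Icc 0 T := Icc_subset_Icc h0a hbT
  have hsep := pi_le_sqrt_mul_sub_of_consecutive_zeros hab hζa hζb
    (fun t ht => (hneg t ht).ne) (fun t ht => hη t (hsub ht)) (fun t ht => hζ1 t (hsub ht))
    (fun t ht => hζ2 t (hsub ht)) (fun t ht => hODE t (hsub ht)) (hηt₁ ▸ hηpos t₁ ht₁)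
    (fun t ht => hηlb ⟨t, hsub ht, rfl⟩) (fun t ht => hθbar' t (hsub ht))
  have hlen : √(θbar / (2 * ηbar)) * (b - a) ≤ √(θbar / (2 * ηbar)) * T :=
    mul_le_mul_of_nonneg_left (by linarith) (sqrt_nonneg _)
  linarith

/-- Under `√γ·T < π` with `γ = θ̄/(2η̄)` and `Q ≥ 0`, any twice
continuously differentiable solution of the Euler–Lagrange boundary value problem is
nonnegative on `[0,T]`. -/
theorem stmt14 (T Q : ℝ) (hT : 0 < T) (hQ : 0 ≤ Q)
    (θ η θ' η' : ℝ → ℝ)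
    (hθ : ∀ t ∈ Set.Icc 0 T, HasDerivAt θ (θ' t) t)
    (hθ'c : ContinuousOn θ' (Set.Icc 0 T))
    (hη : ∀ t ∈ Set.Icc 0 T, HasDerivAt η (η' t) t)
    (hη'c : ContinuousOn η' (Set.Icc 0 T))
    (hηpos : ∀ t ∈ Set.Icc 0 T, 0 < η t)
    (ηbar θbar : ℝ)
    (hηbar : IsLeast (η '' Set.Icc 0 T) ηbar)
    (hθbar : 0 < θbar)
    (hθbar' : ∀ t ∈ Set.Icc 0 T, -θ' t ≤ θbar)
    (hγ : Real.sqrt (θbar / (2 * ηbar)) * T < Real.pi)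
    (ζ ζ' ζ'' : ℝ → ℝ)
    (hζ1 : ∀ t ∈ Set.Icc 0 T, HasDerivAt ζ (ζ' t) t)
    (hζ2 : ∀ t ∈ Set.Icc 0 T, HasDerivAt ζ' (ζ'' t) t)
    (hζ''c : ContinuousOn ζ'' (Set.Icc 0 T))
    (hODE : ∀ t ∈ Set.Icc 0 T, 2 * η t * ζ'' t + 2 * η' t * ζ' t - θ' t * ζ t = 0)
    (hζ0 : ζ 0 = Q) (hζT : ζ T = 0) :
    ∀ t ∈ Set.Icc 0 T, 0 ≤ ζ t :=
  stmt14_general T Q hQ η θ' η' hη hηpos ηbar θbar hηbar hθbar' hγ ζ ζ' ζ'' hζ1 hζ2 hODE hζ0 hζT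
end

section
/- Fix T > 0 and Q > 0. Let θ, η : [0,T] → ℝ be continuously differentiable with η(t) > 0, θ'(t) ≥ 0, and η'(t) ≥ 0 for all t ∈ [0,T]. If ζ : [0,T] → ℝ is twice continuously differentiable and satisfies 2η(t)ζ''(t) + 2η'(t)ζ'(t) − θ'(t)ζ(t) = 0 for all t ∈ [0,T], ζ(0) = Q, and ζ(T) = 0, then ζ(t) ≥ 0 for all t, ζ is nonincreasing (ζ'(t) ≤ 0 for all t), ζ is convex (ζ''(t) ≥ 0 for all t), and ζ(t) ≤ Q·(1 − t/T) for all t ∈ [0,T] (the solution is bounded above by the TWAP strategy). -/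
open Set Filter Topology

/-! Write `φ = 2ηζ'` for the flux; the Euler–Lagrange equation reads `φ' = θ'ζ`.
If `ζ` dipped below zero, then from an interior minimum `t₀` (where `φ = 0`) up to the next
point where `ζ ≥ 0` we would have `φ' ≤ 0`, hence `ζ' ≤ 0`, so `ζ` could never recover.
Once `ζ ≥ 0`, the flux is nondecreasing, and it is `≤ 0` at `T` because `ζ(T) = 0` is a
minimum; hence `ζ' ≤ 0` everywhere. The equation then gives `2ηζ'' = θ'ζ - 2η'ζ' ≥ 0`, and a
convex function lies below its chord, which is the TWAP line. -/

theorem monotoneOn_Icc_of_hasDerivAt_nonneg {f f' : ℝ → ℝ} {a b : ℝ}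
    (hf : ∀ t ∈ Icc a b, HasDerivAt f (f' t) t) (hf' : ∀ t ∈ Ioo a b, 0 ≤ f' t) :
    MonotoneOn f (Icc a b) :=
  monotoneOn_of_hasDerivWithinAt_nonneg (convex_Icc a b)
    (fun t ht => (hf t ht).continuousAt.continuousWithinAt)
    (fun t ht => (hf t (interior_subset ht)).hasDerivWithinAt)
    (fun t ht => hf' t (by rwa [interior_Icc] at ht))

theorem antitoneOn_Icc_of_hasDerivAt_nonpos {f f' : ℝ → ℝ} {a b : ℝ}
    (hf : ∀ t ∈ Icc a b, HasDerivAt f (f' t) t) (hf' : ∀ t ∈ Ioo a b, f' t ≤ 0) :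
    AntitoneOn f (Icc a b) :=
  antitoneOn_of_hasDerivWithinAt_nonpos (convex_Icc a b)
    (fun t ht => (hf t ht).continuousAt.continuousWithinAt)
    (fun t ht => (hf t (interior_subset ht)).hasDerivWithinAt)
    (fun t ht => hf' t (by rwa [interior_Icc] at ht))

theorem convexOn_Icc_of_hasDerivAt2_nonneg {f f' f'' : ℝ → ℝ} {a b : ℝ}
    (hf : ∀ t ∈ Icc a b, HasDerivAt f (f' t) t) (hf' : ∀ t ∈ Icc a b, HasDerivAt f' (f'' t) t)
    (hf'' : ∀ t ∈ Icc a b, 0 ≤ f'' t) : ConvexOn ℝ (Icc a b) f :=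
  convexOn_of_hasDerivWithinAt2_nonneg (convex_Icc a b)
    (fun t ht => (hf t ht).continuousAt.continuousWithinAt)
    (fun t ht => (hf t (interior_subset ht)).hasDerivWithinAt)
    (fun t ht => (hf' t (interior_subset ht)).hasDerivWithinAt)
    (fun t ht => hf'' t (interior_subset ht))

theorem HasDerivAt.nonpos_of_isMinOn_Icc {f : ℝ → ℝ} {f' a b : ℝ} (hf : HasDerivAt f f' b)
    (hmin : IsMinOn f (Icc a b) b) (hab : a < b) : f' ≤ 0 := by
  have hslope : ∀ᶠ t in 𝓝[<] b, slope f b t ≤ 0 := by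
    filter_upwards [Ioo_mem_nhdsLT hab] with t ht
    rw [slope_def_field]
    exact div_nonpos_of_nonneg_of_nonpos (sub_nonneg.2 (hmin ⟨ht.1.le, ht.2.le⟩))
      (sub_nonpos.2 ht.2.le)
  exact le_of_tendsto (hasDerivAt_iff_tendsto_slope_left_right.1 hf).1 hslope

section Flux

variable {a b : ℝ} {u u' p q : ℝ → ℝ}

theorem antitoneOn_of_hasDerivAt_flux_of_nonpos (hu : ∀ t ∈ Icc a b, HasDerivAt u (u' t) t)
    (hflux : ∀ t ∈ Icc a b, HasDerivAt (fun s => p s * u' s) (q t * u t) t)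
    (hp : ∀ t ∈ Icc a b, 0 < p t) (hq : ∀ t ∈ Icc a b, 0 ≤ q t)
    (hu'a : u' a ≤ 0) (hnonpos : ∀ t ∈ Ioo a b, u t ≤ 0) : AntitoneOn u (Icc a b) := by
  have hflux_anti : AntitoneOn (fun s => p s * u' s) (Icc a b) :=
    antitoneOn_Icc_of_hasDerivAt_nonpos hflux fun t ht =>
      mul_nonpos_of_nonneg_of_nonpos (hq t (Ioo_subset_Icc_self ht)) (hnonpos t ht)
  refine antitoneOn_Icc_of_hasDerivAt_nonpos hu fun t ht => ?_
  have ht' := Ioo_subset_Icc_self ht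
  have ha : a ∈ Icc a b := left_mem_Icc.2 (ht'.1.trans ht'.2)
  have : p t * u' t ≤ 0 :=
    (hflux_anti ha ht' ht'.1).trans (mul_nonpos_of_nonneg_of_nonpos (hp a ha).le hu'a)
  exact nonpos_of_mul_nonpos_right this (hp t ht')

theorem nonneg_of_hasDerivAt_flux (hu : ∀ t ∈ Icc a b, HasDerivAt u (u' t) t)
    (hflux : ∀ t ∈ Icc a b, HasDerivAt (fun s => p s * u' s) (q t * u t) t)
    (hp : ∀ t ∈ Icc a b, 0 < p t) (hq : ∀ t ∈ Icc a b, 0 ≤ q t)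
    (ha : 0 ≤ u a) (hb : 0 ≤ u b) : ∀ t ∈ Icc a b, 0 ≤ u t := by
  by_contra! ⟨s, hs, hus⟩
  have hu_cont : ContinuousOn u (Icc a b) := fun t ht =>
    (hu t ht).continuousAt.continuousWithinAt
  obtain ⟨t₀, ht₀, hmin⟩ := isCompact_Icc.exists_isMinOn ⟨s, hs⟩ hu_cont
  have hut₀ : u t₀ < 0 := (hmin hs).trans_lt hus
  have ht₀' : t₀ ∈ Ioo a b :=
    ⟨ht₀.1.lt_of_ne (by rintro rfl; linarith), ht₀.2.lt_of_ne (by rintro rfl; linarith)⟩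
  have hu't₀ : u' t₀ = 0 :=
    (hmin.isLocalMin (Icc_mem_nhds ht₀'.1 ht₀'.2)).hasDerivAt_eq_zero (hu t₀ ht₀)
  set S := Icc t₀ b ∩ u ⁻¹' Ici 0
  have hS : IsCompact S := isCompact_Icc.of_isClosed_subset
    ((hu_cont.mono (Icc_subset_Icc_left ht₀.1)).preimage_isClosed_of_isClosed
      isClosed_Icc isClosed_Ici) inter_subset_left
  obtain ⟨c, ⟨hc, huc⟩, hc_least⟩ := hS.exists_isLeast ⟨b, right_mem_Icc.2 ht₀.2, hb⟩
  have hsub : Icc t₀ c ⊆ Icc a b := Icc_subset_Icc ht₀.1 hc.2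
  have hneg : ∀ t ∈ Ioo t₀ c, u t ≤ 0 := fun t ht => le_of_not_ge fun hut =>
    (hc_least ⟨⟨ht.1.le, ht.2.le.trans hc.2⟩, hut⟩).not_gt ht.2
  have hanti := antitoneOn_of_hasDerivAt_flux_of_nonpos (fun t ht => hu t (hsub ht))
    (fun t ht => hflux t (hsub ht)) (fun t ht => hp t (hsub ht)) (fun t ht => hq t (hsub ht))
    hu't₀.le hneg
  have := hanti (left_mem_Icc.2 hc.1) (right_mem_Icc.2 hc.1) hc.1
  exact absurd (huc.trans this) hut₀.not_ge

theorem deriv_nonpos_of_hasDerivAt_flux (hu : ∀ t ∈ Icc a b, HasDerivAt u (u' t) t)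
    (hflux : ∀ t ∈ Icc a b, HasDerivAt (fun s => p s * u' s) (q t * u t) t)
    (hp : ∀ t ∈ Icc a b, 0 < p t) (hq : ∀ t ∈ Icc a b, 0 ≤ q t) (hab : a < b)
    (hnonneg : ∀ t ∈ Icc a b, 0 ≤ u t) (hb : u b = 0) : ∀ t ∈ Icc a b, u' t ≤ 0 := by
  have hbI : b ∈ Icc a b := right_mem_Icc.2 hab.le
  have hu'b : u' b ≤ 0 :=
    (hu b hbI).nonpos_of_isMinOn_Icc (fun t ht => hb ▸ hnonneg t ht) hab
  have hflux_mono : MonotoneOn (fun s => p s * u' s) (Icc a b) :=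
    monotoneOn_Icc_of_hasDerivAt_nonneg hflux fun t ht =>
      mul_nonneg (hq t (Ioo_subset_Icc_self ht)) (hnonneg t (Ioo_subset_Icc_self ht))
  intro t ht
  have : p t * u' t ≤ 0 :=
    (hflux_mono ht hbI ht.2).trans (mul_nonpos_of_nonneg_of_nonpos (hp b hbI).le hu'b)
  exact nonpos_of_mul_nonpos_right this (hp t ht)

end Flux

theorem stmt15_general (T Q : ℝ) (hT : 0 < T) (hQ : 0 < Q)
    (η θ' η' : ℝ → ℝ)
    (hη : ∀ t ∈ Set.Icc 0 T, HasDerivAt η (η' t) t)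
    (hηpos : ∀ t ∈ Set.Icc 0 T, 0 < η t)
    (hθ'nonneg : ∀ t ∈ Set.Icc 0 T, 0 ≤ θ' t)
    (hη'nonneg : ∀ t ∈ Set.Icc 0 T, 0 ≤ η' t)
    (ζ ζ' ζ'' : ℝ → ℝ)
    (hζ1 : ∀ t ∈ Set.Icc 0 T, HasDerivAt ζ (ζ' t) t)
    (hζ2 : ∀ t ∈ Set.Icc 0 T, HasDerivAt ζ' (ζ'' t) t)
    (hODE : ∀ t ∈ Set.Icc 0 T, 2 * η t * ζ'' t + 2 * η' t * ζ' t - θ' t * ζ t = 0)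
    (hζ0 : ζ 0 = Q) (hζT : ζ T = 0) :
    (∀ t ∈ Set.Icc 0 T, 0 ≤ ζ t) ∧
    (∀ t ∈ Set.Icc 0 T, ζ' t ≤ 0) ∧
    (∀ t ∈ Set.Icc 0 T, 0 ≤ ζ'' t) ∧
    (∀ t ∈ Set.Icc 0 T, ζ t ≤ Q * (1 - t / T)) := by
  have hflux : ∀ t ∈ Icc 0 T, HasDerivAt (fun s => 2 * η s * ζ' s) (θ' t * ζ t) t := by
    intro t ht
    refine (((hη t ht).const_mul 2).mul (hζ2 t ht)).congr_deriv ?_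
    linarith [hODE t ht]
  have h2η : ∀ t ∈ Icc 0 T, 0 < 2 * η t := fun t ht => mul_pos two_pos (hηpos t ht)
  have hnonneg := nonneg_of_hasDerivAt_flux (p := fun s => 2 * η s) hζ1 hflux h2η hθ'nonneg
    (hζ0 ▸ hQ.le) hζT.ge
  have hdecr := deriv_nonpos_of_hasDerivAt_flux (p := fun s => 2 * η s) hζ1 hflux h2η
    hθ'nonneg hT hnonneg hζT
  have hconvex : ∀ t ∈ Icc 0 T, 0 ≤ ζ'' t := fun t ht => by
    refine nonneg_of_mul_nonneg_right ?_ (h2η t ht)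
    linarith [mul_nonneg (hθ'nonneg t ht) (hnonneg t ht),
      mul_nonneg (hη'nonneg t ht) (neg_nonneg.2 (hdecr t ht)), hODE t ht]
  refine ⟨hnonneg, hdecr, hconvex, fun t ht => ?_⟩
  have hw₁ : 0 ≤ 1 - t / T := sub_nonneg.2 ((div_le_one hT).2 ht.2)
  have hw₂ : 0 ≤ t / T := div_nonneg ht.1 hT.le
  calc ζ t = ζ ((1 - t / T) • 0 + (t / T) • T) := by
        rw [smul_zero, zero_add, smul_eq_mul, div_mul_cancel₀ t hT.ne']
    _ ≤ (1 - t / T) • ζ 0 + (t / T) • ζ T :=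
        (convexOn_Icc_of_hasDerivAt2_nonneg hζ1 hζ2 hconvex).2 (left_mem_Icc.2 hT.le)
          (right_mem_Icc.2 hT.le) hw₁ hw₂ (sub_add_cancel 1 _)
    _ = Q * (1 - t / T) := by
        rw [hζ0, hζT, smul_eq_mul, smul_eq_mul, mul_zero, add_zero, mul_comm]

/-- If both permanent and temporary impact are nondecreasing, any twice
continuously differentiable solution of the Euler–Lagrange boundary value problem (with
`Q > 0`) is nonnegative, nonincreasing, convex, and bounded above by the TWAP strategy
`t ↦ Q (1 − t/T)`. -/
theorem stmt15 (T Q : ℝ) (hT : 0 < T) (hQ : 0 < Q)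
    (θ η θ' η' : ℝ → ℝ)
    (hθ : ∀ t ∈ Set.Icc 0 T, HasDerivAt θ (θ' t) t)
    (hθ'c : ContinuousOn θ' (Set.Icc 0 T))
    (hη : ∀ t ∈ Set.Icc 0 T, HasDerivAt η (η' t) t)
    (hη'c : ContinuousOn η' (Set.Icc 0 T))
    (hηpos : ∀ t ∈ Set.Icc 0 T, 0 < η t)
    (hθ'nonneg : ∀ t ∈ Set.Icc 0 T, 0 ≤ θ' t)
    (hη'nonneg : ∀ t ∈ Set.Icc 0 T, 0 ≤ η' t)
    (ζ ζ' ζ'' : ℝ → ℝ)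
    (hζ1 : ∀ t ∈ Set.Icc 0 T, HasDerivAt ζ (ζ' t) t)
    (hζ2 : ∀ t ∈ Set.Icc 0 T, HasDerivAt ζ' (ζ'' t) t)
    (hζ''c : ContinuousOn ζ'' (Set.Icc 0 T))
    (hODE : ∀ t ∈ Set.Icc 0 T, 2 * η t * ζ'' t + 2 * η' t * ζ' t - θ' t * ζ t = 0)
    (hζ0 : ζ 0 = Q) (hζT : ζ T = 0) :
    (∀ t ∈ Set.Icc 0 T, 0 ≤ ζ t) ∧
    (∀ t ∈ Set.Icc 0 T, ζ' t ≤ 0) ∧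
    (∀ t ∈ Set.Icc 0 T, 0 ≤ ζ'' t) ∧
    (∀ t ∈ Set.Icc 0 T, ζ t ≤ Q * (1 - t / T)) :=
  stmt15_general T Q hT hQ η θ' η' hη hηpos hθ'nonneg hη'nonneg ζ ζ' ζ'' hζ1 hζ2 hODE hζ0 hζT
end

section
/- Fix T > 0 and Q > 0. Let θ, η : [0,T] → ℝ be continuously differentiable with η(t) > 0, θ'(t) ≥ 0, and η'(t) ≤ 0 for all t ∈ [0,T]. If ζ : [0,T] → ℝ is twice continuously differentiable and satisfies 2η(t)ζ''(t) + 2η'(t)ζ'(t) − θ'(t)ζ(t) = 0 for all t ∈ [0,T], ζ(0) = Q, and ζ(T) = 0, then ζ(t) ≥ 0 for all t and ζ is nonincreasing on [0,T] (ζ'(t) ≤ 0 for all t); in particular the optimal execution admits no transaction-triggered price manipulation. -/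
open Set MeasureTheory Real

lemma deriv_nonpos_of_right_max {f : ℝ → ℝ} {f' a b : ℝ} (hab : a < b)
    (hd : HasDerivAt f f' a) (h : ∀ t ∈ Set.Ioc a b, f t ≤ f a) : f' ≤ 0 := by
  have hd' : HasDerivWithinAt f f' (Set.Ioi a) a := hd.hasDerivWithinAt
  rw [hasDerivWithinAt_iff_tendsto_slope] at hd'
  rw [Set.diff_singleton_eq_self (by simp)] at hd'
  refine le_of_tendsto hd' ?_
  filter_upwards [Ioc_mem_nhdsGT_of_mem ⟨le_refl a, hab⟩] with t ht
  rw [slope_def_field]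
  apply div_nonpos_of_nonpos_of_nonneg (sub_nonpos.2 (h t ht)) (sub_nonneg.2 ht.1.le)

lemma deriv_nonneg_of_left_max {f : ℝ → ℝ} {f' a b : ℝ} (hab : a < b)
    (hd : HasDerivAt f f' b) (h : ∀ t ∈ Set.Ico a b, f t ≤ f b) : 0 ≤ f' := by
  have hd' : HasDerivWithinAt f f' (Set.Iio b) b := hd.hasDerivWithinAt
  rw [hasDerivWithinAt_iff_tendsto_slope] at hd'
  rw [Set.diff_singleton_eq_self (by simp)] at hd'
  refine ge_of_tendsto hd' ?_
  filter_upwards [Ico_mem_nhdsLT_of_mem ⟨hab, le_refl b⟩] with t ht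
  rw [slope_def_field]
  exact div_nonneg_iff.2 (Or.inr ⟨sub_nonpos.2 (h t ht), sub_nonpos.2 ht.2.le⟩)

/-- If the permanent impact is nondecreasing and the temporary impact is
nonincreasing, any twice continuously differentiable solution of the Euler–Lagrange
boundary value problem (with `Q > 0`) is nonnegative and nonincreasing on `[0,T]`; in
particular the optimal execution admits no transaction-triggered price manipulation. -/
theorem stmt17 (T Q : ℝ) (hT : 0 < T) (hQ : 0 < Q)
    (θ η θ' η' : ℝ → ℝ)
    (hθ : ∀ t ∈ Set.Icc 0 T, HasDerivAt θ (θ' t) t)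
    (hθ'c : ContinuousOn θ' (Set.Icc 0 T))
    (hη : ∀ t ∈ Set.Icc 0 T, HasDerivAt η (η' t) t)
    (hη'c : ContinuousOn η' (Set.Icc 0 T))
    (hηpos : ∀ t ∈ Set.Icc 0 T, 0 < η t)
    (hθ'nonneg : ∀ t ∈ Set.Icc 0 T, 0 ≤ θ' t)
    (hη'nonpos : ∀ t ∈ Set.Icc 0 T, η' t ≤ 0)
    (ζ ζ' ζ'' : ℝ → ℝ)
    (hζ1 : ∀ t ∈ Set.Icc 0 T, HasDerivAt ζ (ζ' t) t)
    (hζ2 : ∀ t ∈ Set.Icc 0 T, HasDerivAt ζ' (ζ'' t) t)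
    (hζ''c : ContinuousOn ζ'' (Set.Icc 0 T))
    (hODE : ∀ t ∈ Set.Icc 0 T, 2 * η t * ζ'' t + 2 * η' t * ζ' t - θ' t * ζ t = 0)
    (hζ0 : ζ 0 = Q) (hζT : ζ T = 0) :
    (∀ t ∈ Set.Icc 0 T, 0 ≤ ζ t) ∧
    (∀ t ∈ Set.Icc 0 T, ζ' t ≤ 0) := by
  set G : ℝ → ℝ := fun t => 2 * η t * ζ' t with hGdef
  have hζcont : ContinuousOn ζ (Set.Icc 0 T) := fun t ht =>
    (hζ1 t ht).continuousAt.continuousWithinAt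
  have hG : ∀ t ∈ Set.Icc 0 T, HasDerivAt G (θ' t * ζ t) t := by
    intro t ht
    have h1 := ((hη t ht).const_mul 2).mul (hζ2 t ht)
    have h2 : 2 * η' t * ζ' t + 2 * η t * ζ'' t = θ' t * ζ t := by
      have := hODE t ht; linarith
    rw [h2] at h1
    exact h1
  -- Part 1 : ζ ≥ 0
  have hnn : ∀ t ∈ Set.Icc 0 T, 0 ≤ ζ t := by
    by_contra hcon
    push_neg at hcon
    obtain ⟨s, hs, hsneg⟩ := hcon
    have hsub1 : Set.Icc (0:ℝ) s ⊆ Set.Icc 0 T := Set.Icc_subset_Icc le_rfl hs.2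
    have hsub2 : Set.Icc s T ⊆ Set.Icc 0 T := Set.Icc_subset_Icc hs.1 le_rfl
    -- last zero before s
    set Z₁ : Set ℝ := Set.Icc 0 s ∩ ζ ⁻¹' {0} with hZ1def
    have hZ1c : IsClosed Z₁ :=
      (hζcont.mono hsub1).preimage_isClosed_of_isClosed isClosed_Icc isClosed_singleton
    have hZ1ne : Z₁.Nonempty := by
      have h0 : (0:ℝ) ∈ Set.Icc (ζ s) (ζ 0) := ⟨hsneg.le, by rw [hζ0]; exact hQ.le⟩
      obtain ⟨c, hc, hc0⟩ := intermediate_value_Icc' hs.1 (hζcont.mono hsub1) h0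
      exact ⟨c, hc, hc0⟩
    have hZ1bdd : BddAbove Z₁ := ⟨s, fun x hx => hx.1.2⟩
    set u := sSup Z₁ with hudef
    have humem : u ∈ Z₁ := hZ1c.csSup_mem hZ1ne hZ1bdd
    have hζu : ζ u = 0 := humem.2
    have hus : u < s := lt_of_le_of_ne humem.1.2 (fun h => hsneg.ne (by rw [← h]; exact hζu))
    have hu0 : (0:ℝ) ≤ u := humem.1.1
    -- ζ ≤ 0 on (u, s]
    have hneg1 : ∀ t ∈ Set.Ioc u s, ζ t ≤ 0 := by
      intro t ht
      by_contra hpos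
      push_neg at hpos
      have hts : t ≤ s := ht.2
      have h0 : (0:ℝ) ∈ Set.Icc (ζ s) (ζ t) := ⟨hsneg.le, hpos.le⟩
      obtain ⟨c, hc, hc0⟩ := intermediate_value_Icc' hts
        (hζcont.mono (Set.Icc_subset_Icc (hu0.trans ht.1.le) hs.2)) h0
      have hcZ : c ∈ Z₁ := ⟨⟨hu0.trans (ht.1.le.trans hc.1), hc.2⟩, hc0⟩
      have : c ≤ u := le_csSup hZ1bdd hcZ
      have : t ≤ u := hc.1.trans this
      exact absurd ht.1 (not_lt.2 this)
    -- first zero after s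
    set Z₂ : Set ℝ := Set.Icc s T ∩ ζ ⁻¹' {0} with hZ2def
    have hZ2c : IsClosed Z₂ :=
      (hζcont.mono hsub2).preimage_isClosed_of_isClosed isClosed_Icc isClosed_singleton
    have hZ2ne : Z₂.Nonempty := ⟨T, ⟨hs.2, le_rfl⟩, hζT⟩
    have hZ2bdd : BddBelow Z₂ := ⟨s, fun x hx => hx.1.1⟩
    set v := sInf Z₂ with hvdef
    have hvmem : v ∈ Z₂ := hZ2c.csInf_mem hZ2ne hZ2bdd
    have hζv : ζ v = 0 := hvmem.2
    have hsv : s < v := lt_of_le_of_ne hvmem.1.1 (fun h => hsneg.ne (by rw [h]; exact hζv))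
    have hvT : v ≤ T := hvmem.1.2
    have hneg2 : ∀ t ∈ Set.Ico s v, ζ t ≤ 0 := by
      intro t ht
      by_contra hpos
      push_neg at hpos
      have h0 : (0:ℝ) ∈ Set.Icc (ζ s) (ζ t) := ⟨hsneg.le, hpos.le⟩
      obtain ⟨c, hc, hc0⟩ := intermediate_value_Icc ht.1
        (hζcont.mono (Set.Icc_subset_Icc hs.1 ((ht.2.le.trans hvT)))) h0
      have hcZ : c ∈ Z₂ := ⟨⟨hc.1, (hc.2.trans ht.2.le).trans hvT⟩, hc0⟩
      have : v ≤ c := csInf_le hZ2bdd hcZ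
      exact absurd (lt_of_le_of_lt (this.trans hc.2) ht.2) (lt_irrefl v)
    have huv : u < v := hus.trans hsv
    have hsubuv : Set.Icc u v ⊆ Set.Icc 0 T := Set.Icc_subset_Icc hu0 hvT
    -- ζ ≤ 0 on [u, v]
    have hle : ∀ t ∈ Set.Icc u v, ζ t ≤ 0 := by
      intro t ht
      rcases eq_or_lt_of_le ht.1 with h | h
      · rw [← h, hζu]
      rcases le_or_gt t s with h2 | h2
      · exact hneg1 t ⟨h, h2⟩
      rcases eq_or_lt_of_le ht.2 with h3 | h3
      · rw [h3, hζv]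
      · exact hneg2 t ⟨h2.le, h3⟩
    -- G is antitone on [u,v]
    have hGanti : AntitoneOn G (Set.Icc u v) := by
      apply antitoneOn_of_deriv_nonpos (convex_Icc u v)
      · exact fun t ht => (hG t (hsubuv ht)).continuousAt.continuousWithinAt
      · intro t ht
        rw [interior_Icc] at ht
        exact (hG t (hsubuv (Set.Ioo_subset_Icc_self ht))).differentiableAt.differentiableWithinAt
      · intro t ht
        rw [interior_Icc] at ht
        have htI := hsubuv (Set.Ioo_subset_Icc_self ht)
        rw [(hG t htI).deriv]
        exact mul_nonpos_of_nonneg_of_nonpos (hθ'nonneg t htI)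
          (hle t (Set.Ioo_subset_Icc_self ht))
    -- endpoint derivative signs
    have hζ'u : ζ' u ≤ 0 := by
      apply deriv_nonpos_of_right_max huv (hζ1 u (hsubuv (Set.left_mem_Icc.2 huv.le)))
      intro t ht
      rw [hζu]
      exact hle t ⟨ht.1.le, ht.2⟩
    have hζ'v : 0 ≤ ζ' v := by
      apply deriv_nonneg_of_left_max huv (hζ1 v (hsubuv (Set.right_mem_Icc.2 huv.le)))
      intro t ht
      rw [hζv]
      exact hle t ⟨ht.1, ht.2.le⟩
    have hηu : 0 < η u := hηpos u (hsubuv (Set.left_mem_Icc.2 huv.le))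
    have hηv : 0 < η v := hηpos v (hsubuv (Set.right_mem_Icc.2 huv.le))
    have hGu : G u ≤ 0 := mul_nonpos_of_nonneg_of_nonpos (by linarith) hζ'u
    have hGv : 0 ≤ G v := mul_nonneg (by linarith) hζ'v
    -- G ≡ 0 on [u,v], hence ζ' ≡ 0 there
    have hζ'zero : ∀ t ∈ Set.Icc u v, ζ' t = 0 := by
      intro t ht
      have h1 : G t ≤ G u := hGanti (Set.left_mem_Icc.2 huv.le) ht ht.1
      have h2 : G v ≤ G t := hGanti ht (Set.right_mem_Icc.2 huv.le) ht.2
      have hGt : G t = 0 := le_antisymm (h1.trans hGu) (hGv.trans h2)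
      have hηt : 0 < η t := hηpos t (hsubuv ht)
      have : 2 * η t * ζ' t = 0 := hGt
      nlinarith [this]
    -- ζ constant on [u,v]
    have hconst := constant_of_has_deriv_right_zero (f := ζ) (a := u) (b := v)
      (hζcont.mono hsubuv)
      (fun x hx => by
        have := (hζ1 x (hsubuv (Set.Ico_subset_Icc_self hx))).hasDerivWithinAt (s := Set.Ici x)
        rwa [hζ'zero x (Set.Ico_subset_Icc_self hx)] at this)
    have : ζ s = ζ u := hconst s ⟨hus.le, hsv.le⟩
    rw [hζu] at this
    exact absurd this hsneg.ne
  refine ⟨hnn, ?_⟩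
  -- Part 2 : ζ' ≤ 0
  have hGmono : MonotoneOn G (Set.Icc 0 T) := by
    apply monotoneOn_of_deriv_nonneg (convex_Icc 0 T)
    · exact fun t ht => (hG t ht).continuousAt.continuousWithinAt
    · intro t ht
      rw [interior_Icc] at ht
      exact (hG t (Set.Ioo_subset_Icc_self ht)).differentiableAt.differentiableWithinAt
    · intro t ht
      rw [interior_Icc] at ht
      have htI := Set.Ioo_subset_Icc_self ht
      rw [(hG t htI).deriv]
      exact mul_nonneg (hθ'nonneg t htI) (hnn t htI)
  have hζ'T : ζ' T ≤ 0 := by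
    have hd : HasDerivAt (fun t => -ζ t) (-ζ' T) T :=
      (hζ1 T (Set.right_mem_Icc.2 hT.le)).neg
    have h := deriv_nonneg_of_left_max (a := 0) hT hd
      (fun t ht => by
        simp only [neg_le_neg_iff, hζT]
        · exact hnn t ⟨ht.1, ht.2.le⟩)
    linarith
  intro t ht
  have hGT : G T ≤ 0 := by
    have hηT : 0 < η T := hηpos T (Set.right_mem_Icc.2 hT.le)
    exact mul_nonpos_of_nonneg_of_nonpos (by linarith) hζ'T
  have h1 : G t ≤ G T := hGmono ht (Set.right_mem_Icc.2 hT.le) ht.2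
  have hηt : 0 < η t := hηpos t ht
  have : 2 * η t * ζ' t ≤ 0 := h1.trans hGT
  nlinarith [this]
end

section
/- Fix T > 0 and Q > 0. Let θ, η : [0,T] → ℝ be continuously differentiable with η(t) > 0, θ'(t) ≤ 0, and η'(t) ≤ 0 for all t ∈ [0,T]. Let η̄ = min_{t∈[0,T]} η(t) and let θ̄ > 0 be a constant with θ̄ ≥ −θ'(t) for all t; set γ = θ̄/(2η̄) and assume √γ·T < π. If ζ : [0,T] → ℝ is twice continuously differentiable and satisfies 2η(t)ζ''(t) + 2η'(t)ζ'(t) − θ'(t)ζ(t) = 0 for all t ∈ [0,T], ζ(0) = Q, and ζ(T) = 0, then ζ(t) ≥ 0 for all t, at every t with ζ'(t) ≤ 0 one has ζ''(t) ≤ 0 (the solution is never locally convex along a nonincreasing phase), and ζ(t) ≥ Q·(1 − t/T) for all t ∈ [0,T] (the solution is bounded below by the TWAP strategy). -/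
/-!
`g = ζ - TWAP` satisfies `2η g'' + 2η' g' - θ' g ≤ 0` (the TWAP line is a subsolution because
`η', θ' ≤ 0`) and vanishes at `0` and `T`. If `g` were negative somewhere, `φ = -g` would be a
nonnegative subsolution on a nodal interval `[a, b]` of length `≤ T < π / √γ`. Picone's identity
with the positive comparison function `u = cos (ω (t - (a + b) / 2))`, `ω` slightly above `√γ`,
makes `2η φ φ' - 2η̄ φ² u' / u` nondecreasing with zero boundary values, hence constant, while
its derivative is positive wherever `φ ≠ 0`: a contradiction. Nonnegativity of `ζ` and the sign
of `ζ''` then follow from the ODE.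
-/

open Set Real Topology

theorem cos_pos_of_mem_Icc {ω a b t : ℝ} (hω : 0 ≤ ω) (hωab : ω * (b - a) < π)
    (ht : t ∈ Icc a b) : 0 < cos (ω * (t - (a + b) / 2)) := by
  apply cos_pos_of_mem_Ioo
  constructor
  · nlinarith [mul_nonneg hω (sub_nonneg.2 ht.1)]
  · nlinarith [mul_nonneg hω (sub_nonneg.2 ht.2)]

/-- Picone's identity for `(P φ')' + q φ`, compared with a solution `u` of `u'' = -k u`. -/
theorem hasDerivAt_picone_s18 {P P' φ φ' φ'' u v : ℝ → ℝ} {p₀ k q t : ℝ}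
    (hP : HasDerivAt P (P' t) t) (hφ : HasDerivAt φ (φ' t) t) (hφ' : HasDerivAt φ' (φ'' t) t)
    (hu : HasDerivAt u (v t) t) (hv : HasDerivAt v (-k * u t) t) (hu0 : u t ≠ 0) :
    HasDerivAt (fun s => P s * φ s * φ' s - p₀ * φ s ^ 2 * v s / u s)
      ((P t * φ'' t + P' t * φ' t + q * φ t) * φ t + (p₀ * k - q) * φ t ^ 2
        + (P t - p₀) * φ' t ^ 2 + p₀ * (φ' t - φ t * v t / u t) ^ 2) t := by
  have := ((hP.mul hφ).mul hφ').sub ((((hφ.pow 2).const_mul p₀).mul hv).div hu hu0)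
  refine this.congr_deriv ?_
  simp only [Pi.mul_apply, Pi.pow_apply]
  field_simp
  ring

theorem hasDerivAt_eq_zero_of_monotoneOn {f : ℝ → ℝ} {f' a b t : ℝ}
    (hf : MonotoneOn f (Icc a b)) (hfab : f a = f b) (ht : t ∈ Ioo a b)
    (hft : HasDerivAt f f' t) : f' = 0 := by
  have hab : a ≤ b := (ht.1.trans ht.2).le
  have hconst : f =ᶠ[𝓝 t] fun _ => f a := by
    filter_upwards [Icc_mem_nhds ht.1 ht.2] with s hs
    exact le_antisymm (hfab ▸ hf hs (right_mem_Icc.2 hab) hs.2) (hf (left_mem_Icc.2 hab) hs hs.1)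
  exact hft.unique ((hasDerivAt_const t (f a)).congr_of_eventuallyEq hconst)

section Sturm

variable {P P' q φ φ' φ'' : ℝ → ℝ} {p₀ ω a b : ℝ}

theorem exists_picone_function (hp₀ : 0 ≤ p₀) (hω : 0 ≤ ω) (hωab : ω * (b - a) < π)
    (hP : ∀ t ∈ Icc a b, HasDerivAt P (P' t) t) (hPlb : ∀ t ∈ Ioo a b, p₀ ≤ P t)
    (hφ : ∀ t ∈ Icc a b, HasDerivAt φ (φ' t) t) (hφ' : ∀ t ∈ Icc a b, HasDerivAt φ' (φ'' t) t)
    (hL : ∀ t ∈ Ioo a b, 0 ≤ P t * φ'' t + P' t * φ' t + q t * φ t)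
    (hφnn : ∀ t ∈ Ioo a b, 0 ≤ φ t) (ha : φ a = 0) (hb : φ b = 0) :
    ∃ F F' : ℝ → ℝ, (∀ t ∈ Icc a b, HasDerivAt F (F' t) t) ∧ F a = 0 ∧ F b = 0 ∧
      ∀ t ∈ Ioo a b, (p₀ * ω ^ 2 - q t) * φ t ^ 2 ≤ F' t := by
  set u : ℝ → ℝ := fun s => cos (ω * (s - (a + b) / 2))
  set v : ℝ → ℝ := fun s => -(ω * sin (ω * (s - (a + b) / 2)))
  have hlin (s : ℝ) : HasDerivAt (fun r => ω * (r - (a + b) / 2)) ω s := by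
    simpa using ((hasDerivAt_id s).sub_const ((a + b) / 2)).const_mul ω
  have hu (s : ℝ) : HasDerivAt u (v s) s := by
    refine ((hasDerivAt_cos _).comp s (hlin s)).congr_deriv ?_
    simp only [v]
    ring
  have hv (s : ℝ) : HasDerivAt v (-(ω ^ 2) * u s) s := by
    refine (((hasDerivAt_sin _).comp s (hlin s)).const_mul ω).neg.congr_deriv ?_
    simp only [u]
    ring
  refine ⟨fun s => P s * φ s * φ' s - p₀ * φ s ^ 2 * v s / u s,
    fun s => (P s * φ'' s + P' s * φ' s + q s * φ s) * φ s + (p₀ * ω ^ 2 - q s) * φ s ^ 2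
      + (P s - p₀) * φ' s ^ 2 + p₀ * (φ' s - φ s * v s / u s) ^ 2,
    fun s hs => hasDerivAt_picone_s18 (hP s hs) (hφ s hs) (hφ' s hs) (hu s) (hv s)
      (cos_pos_of_mem_Icc hω hωab hs).ne', by simp [ha], by simp [hb], fun s hs => ?_⟩
  have hLφ := mul_nonneg (hL s hs) (hφnn s hs)
  have hPφ' := mul_nonneg (sub_nonneg.2 (hPlb s hs)) (sq_nonneg (φ' s))
  have hsq := mul_nonneg hp₀ (sq_nonneg (φ' s - φ s * v s / u s))
  linarith

theorem eq_zero_of_nonneg_subsolution (hp₀ : 0 ≤ p₀) (hω : 0 ≤ ω) (hωab : ω * (b - a) < π)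
    (hP : ∀ t ∈ Icc a b, HasDerivAt P (P' t) t) (hPlb : ∀ t ∈ Ioo a b, p₀ ≤ P t)
    (hq : ∀ t ∈ Ioo a b, q t < p₀ * ω ^ 2)
    (hφ : ∀ t ∈ Icc a b, HasDerivAt φ (φ' t) t) (hφ' : ∀ t ∈ Icc a b, HasDerivAt φ' (φ'' t) t)
    (hL : ∀ t ∈ Ioo a b, 0 ≤ P t * φ'' t + P' t * φ' t + q t * φ t)
    (hφnn : ∀ t ∈ Ioo a b, 0 ≤ φ t) (ha : φ a = 0) (hb : φ b = 0) :
    ∀ t ∈ Ioo a b, φ t = 0 := by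
  intro t₀ ht₀
  by_contra hne
  obtain ⟨F, F', hF, hFa, hFb, hF'⟩ :=
    exists_picone_function hp₀ hω hωab hP hPlb hφ hφ' hL hφnn ha hb
  have hF'nn (t : ℝ) (ht : t ∈ Ioo a b) : 0 ≤ F' t :=
    (mul_nonneg (sub_nonneg.2 (hq t ht).le) (sq_nonneg _)).trans (hF' t ht)
  have hmono : MonotoneOn F (Icc a b) := by
    refine monotoneOn_of_hasDerivWithinAt_nonneg (convex_Icc a b)
      (fun t ht => (hF t ht).continuousAt.continuousWithinAt) ?_ (by rwa [interior_Icc])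
    rw [interior_Icc]
    exact fun t ht => (hF t (Ioo_subset_Icc_self ht)).hasDerivWithinAt
  have hF't₀ : F' t₀ = 0 := hasDerivAt_eq_zero_of_monotoneOn hmono (hFa.trans hFb.symm) ht₀
    (hF t₀ (Ioo_subset_Icc_self ht₀))
  have hpos := mul_pos (sub_pos.2 (hq t₀ ht₀)) (sq_pos_of_ne_zero hne)
  linarith [hF' t₀ ht₀]

end Sturm

theorem exists_zero_neg_on_Ioc {g : ℝ → ℝ} {x t₀ : ℝ} (hg : ContinuousOn g (Icc x t₀))
    (hxt : x ≤ t₀) (hx : 0 ≤ g x) (ht₀ : g t₀ < 0) :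
    ∃ a ∈ Ico x t₀, g a = 0 ∧ ∀ s ∈ Ioc a t₀, g s < 0 := by
  set S := Icc x t₀ ∩ g ⁻¹' Ici 0
  have hS : IsClosed S := hg.preimage_isClosed_of_isClosed isClosed_Icc isClosed_Ici
  have hSbdd : BddAbove S := bddAbove_Icc.mono inter_subset_left
  obtain ⟨⟨hxa, hat⟩, hga⟩ : sSup S ∈ S := hS.csSup_mem ⟨x, ⟨le_rfl, hxt⟩, hx⟩ hSbdd
  have hneg (s : ℝ) (hs : s ∈ Ioc (sSup S) t₀) : g s < 0 := by
    by_contra! hgs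
    exact (le_csSup hSbdd ⟨⟨hxa.trans hs.1.le, hs.2⟩, hgs⟩).not_gt hs.1
  have hat₀ : sSup S < t₀ := lt_of_le_of_ne hat fun h => (h ▸ ht₀).not_ge hga
  obtain ⟨z, hz, hgz⟩ :=
    intermediate_value_Icc' hat (hg.mono (Icc_subset_Icc_left hxa)) ⟨ht₀.le, hga⟩
  have hza : z = sSup S := le_antisymm (not_lt.1 fun h => (hneg z ⟨h, hz.2⟩).ne hgz) hz.1
  exact ⟨sSup S, ⟨hxa, hat₀⟩, hza ▸ hgz, hneg⟩

theorem exists_zero_neg_on_Ico {g : ℝ → ℝ} {t₀ y : ℝ} (hg : ContinuousOn g (Icc t₀ y))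
    (hty : t₀ ≤ y) (hy : 0 ≤ g y) (ht₀ : g t₀ < 0) :
    ∃ b ∈ Ioc t₀ y, g b = 0 ∧ ∀ s ∈ Ico t₀ b, g s < 0 := by
  have hg' : ContinuousOn (fun s => g (-s)) (Icc (-y) (-t₀)) :=
    hg.comp continuousOn_neg fun s hs => ⟨by linarith [hs.2], by linarith [hs.1]⟩
  obtain ⟨a, ha, hga, hneg⟩ :=
    exists_zero_neg_on_Ioc hg' (neg_le_neg hty) (by simpa using hy) (by simpa using ht₀)
  refine ⟨-a, ⟨by linarith [ha.2], by linarith [ha.1]⟩, hga, fun s hs => ?_⟩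
  simpa using hneg (-s) ⟨by linarith [hs.2], by linarith [hs.1]⟩

theorem nonneg_of_supersolution {P P' q g g' g'' : ℝ → ℝ} {p₀ ω x y : ℝ} (hp₀ : 0 < p₀)
    (hω : 0 ≤ ω) (hωxy : ω * (y - x) < π)
    (hP : ∀ t ∈ Icc x y, HasDerivAt P (P' t) t) (hPlb : ∀ t ∈ Icc x y, p₀ ≤ P t)
    (hq : ∀ t ∈ Icc x y, q t ≤ p₀ * ω ^ 2)
    (hg : ∀ t ∈ Icc x y, HasDerivAt g (g' t) t) (hg' : ∀ t ∈ Icc x y, HasDerivAt g' (g'' t) t)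
    (hL : ∀ t ∈ Icc x y, P t * g'' t + P' t * g' t + q t * g t ≤ 0)
    (hx : 0 ≤ g x) (hy : 0 ≤ g y) :
    ∀ t ∈ Icc x y, 0 ≤ g t := by
  intro t₀ ht₀
  by_contra! hneg
  have hgc : ContinuousOn g (Icc x y) := fun s hs => (hg s hs).continuousAt.continuousWithinAt
  obtain ⟨a, ha, hga, hnega⟩ :=
    exists_zero_neg_on_Ioc (hgc.mono (Icc_subset_Icc_right ht₀.2)) ht₀.1 hx hneg
  obtain ⟨b, hb, hgb, hnegb⟩ :=
    exists_zero_neg_on_Ico (hgc.mono (Icc_subset_Icc_left ht₀.1)) ht₀.2 hy hneg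
  have hsub : Icc a b ⊆ Icc x y := Icc_subset_Icc ha.1 hb.2
  have hxy : 0 < y - x := by linarith [ha.1, ha.2, hb.1, hb.2]
  -- the strict version of Sturm's estimate needs a slightly larger frequency
  obtain ⟨ω', hωω', hω'⟩ := exists_between ((lt_div_iff₀ hxy).2 hωxy)
  have hω'ab : ω' * (b - a) < π := by
    have := (lt_div_iff₀ hxy).1 hω'
    nlinarith [ha.1, hb.2]
  have hq' (t : ℝ) (ht : t ∈ Icc x y) : q t < p₀ * ω' ^ 2 := by
    have := mul_lt_mul_of_pos_left (pow_lt_pow_left₀ hωω' hω two_ne_zero) hp₀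
    linarith [hq t ht]
  have hzero := eq_zero_of_nonneg_subsolution (φ := fun s => -g s) (φ' := fun s => -g' s)
    (φ'' := fun s => -g'' s) hp₀.le (hω.trans hωω'.le) hω'ab (fun t ht => hP t (hsub ht))
    (fun t ht => hPlb t (hsub (Ioo_subset_Icc_self ht)))
    (fun t ht => hq' t (hsub (Ioo_subset_Icc_self ht)))
    (fun t ht => (hg t (hsub ht)).neg) (fun t ht => (hg' t (hsub ht)).neg)
    (fun t ht => by linarith [hL t (hsub (Ioo_subset_Icc_self ht))])
    (fun t ht => by
      rcases le_or_gt t t₀ with h | h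
      exacts [neg_nonneg.2 (hnega t ⟨ht.1, h⟩).le, neg_nonneg.2 (hnegb t ⟨h.le, ht.2⟩).le])
    (by simp [hga]) (by simp [hgb]) t₀ ⟨ha.2, hb.1⟩
  linarith

theorem stmt18_general (T Q : ℝ) (hT : 0 < T) (hQ : 0 < Q)
    (η θ' η' : ℝ → ℝ)
    (hη : ∀ t ∈ Set.Icc 0 T, HasDerivAt η (η' t) t)
    (hηpos : ∀ t ∈ Set.Icc 0 T, 0 < η t)
    (hθ'nonpos : ∀ t ∈ Set.Icc 0 T, θ' t ≤ 0)
    (hη'nonpos : ∀ t ∈ Set.Icc 0 T, η' t ≤ 0)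
    (ηbar θbar : ℝ)
    (hηbar : IsLeast (η '' Set.Icc 0 T) ηbar)
    (hθbar : 0 < θbar)
    (hθbar' : ∀ t ∈ Set.Icc 0 T, -θ' t ≤ θbar)
    (hγ : Real.sqrt (θbar / (2 * ηbar)) * T < Real.pi)
    (ζ ζ' ζ'' : ℝ → ℝ)
    (hζ1 : ∀ t ∈ Set.Icc 0 T, HasDerivAt ζ (ζ' t) t)
    (hζ2 : ∀ t ∈ Set.Icc 0 T, HasDerivAt ζ' (ζ'' t) t)
    (hODE : ∀ t ∈ Set.Icc 0 T, 2 * η t * ζ'' t + 2 * η' t * ζ' t - θ' t * ζ t = 0)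
    (hζ0 : ζ 0 = Q) (hζT : ζ T = 0) :
    (∀ t ∈ Set.Icc 0 T, 0 ≤ ζ t) ∧
    (∀ t ∈ Set.Icc 0 T, ζ' t ≤ 0 → ζ'' t ≤ 0) ∧
    (∀ t ∈ Set.Icc 0 T, Q * (1 - t / T) ≤ ζ t) := by
  have hηbar_pos : 0 < ηbar := by
    obtain ⟨t, ht, rfl⟩ := hηbar.1
    exact hηpos t ht
  have htwap_nonneg (t : ℝ) (ht : t ∈ Icc 0 T) : 0 ≤ Q * (1 - t / T) :=
    mul_nonneg hQ.le (sub_nonneg.2 ((div_le_one hT).2 ht.2))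
  have htwap (t : ℝ) : HasDerivAt (fun s => Q * (1 - s / T)) (-(Q / T)) t := by
    refine ((((hasDerivAt_id t).div_const T).const_sub 1).const_mul Q).congr_deriv ?_
    ring
  have hgap := nonneg_of_supersolution (P := fun t => 2 * η t) (q := fun t => -θ' t)
    (g := fun t => ζ t - Q * (1 - t / T)) (x := 0) (y := T)
    (by positivity : 0 < 2 * ηbar) (sqrt_nonneg _) (by rwa [sub_zero])
    (fun t ht => (hη t ht).const_mul 2)
    (fun t ht => by linarith [hηbar.2 ⟨t, ht, rfl⟩])
    (fun t ht => by rw [sq_sqrt (by positivity)]; field_simp; exact hθbar' t ht)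
    (fun t ht => (hζ1 t ht).sub (htwap t)) (fun t ht => (hζ2 t ht).sub_const _)
    (fun t ht => by
      have := mul_nonpos_of_nonpos_of_nonneg (hη'nonpos t ht) (div_pos hQ hT).le
      have := mul_nonpos_of_nonpos_of_nonneg (hθ'nonpos t ht) (htwap_nonneg t ht)
      linarith [hODE t ht])
    (by simp [hζ0]) (by simp [hζT, hT.ne'])
  have hlower (t : ℝ) (ht : t ∈ Icc 0 T) : Q * (1 - t / T) ≤ ζ t := by
    linarith [hgap t ht]
  have hζ_nonneg (t : ℝ) (ht : t ∈ Icc 0 T) : 0 ≤ ζ t := (htwap_nonneg t ht).trans (hlower t ht)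
  refine ⟨hζ_nonneg, fun t ht hζ't => ?_, hlower⟩
  have := mul_nonneg_of_nonpos_of_nonpos (hη'nonpos t ht) hζ't
  have := mul_nonpos_of_nonpos_of_nonneg (hθ'nonpos t ht) (hζ_nonneg t ht)
  exact nonpos_of_mul_nonpos_right (by linarith [hODE t ht] : 2 * η t * ζ'' t ≤ 0)
    (by linarith [hηpos t ht])

/-- If both impacts are nonincreasing and `√γ·T < π` with
`γ = θ̄/(2η̄)`, then any twice continuously differentiable solution of the Euler–Lagrange
boundary value problem (with `Q > 0`) is nonnegative, is never locally convex along a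
nonincreasing phase (`ζ' t ≤ 0 → ζ'' t ≤ 0`), and is bounded below by the TWAP strategy. -/
theorem stmt18 (T Q : ℝ) (hT : 0 < T) (hQ : 0 < Q)
    (θ η θ' η' : ℝ → ℝ)
    (hθ : ∀ t ∈ Set.Icc 0 T, HasDerivAt θ (θ' t) t)
    (hθ'c : ContinuousOn θ' (Set.Icc 0 T))
    (hη : ∀ t ∈ Set.Icc 0 T, HasDerivAt η (η' t) t)
    (hη'c : ContinuousOn η' (Set.Icc 0 T))
    (hηpos : ∀ t ∈ Set.Icc 0 T, 0 < η t)
    (hθ'nonpos : ∀ t ∈ Set.Icc 0 T, θ' t ≤ 0)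
    (hη'nonpos : ∀ t ∈ Set.Icc 0 T, η' t ≤ 0)
    (ηbar θbar : ℝ)
    (hηbar : IsLeast (η '' Set.Icc 0 T) ηbar)
    (hθbar : 0 < θbar)
    (hθbar' : ∀ t ∈ Set.Icc 0 T, -θ' t ≤ θbar)
    (hγ : Real.sqrt (θbar / (2 * ηbar)) * T < Real.pi)
    (ζ ζ' ζ'' : ℝ → ℝ)
    (hζ1 : ∀ t ∈ Set.Icc 0 T, HasDerivAt ζ (ζ' t) t)
    (hζ2 : ∀ t ∈ Set.Icc 0 T, HasDerivAt ζ' (ζ'' t) t)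
    (hζ''c : ContinuousOn ζ'' (Set.Icc 0 T))
    (hODE : ∀ t ∈ Set.Icc 0 T, 2 * η t * ζ'' t + 2 * η' t * ζ' t - θ' t * ζ t = 0)
    (hζ0 : ζ 0 = Q) (hζT : ζ T = 0) :
    (∀ t ∈ Set.Icc 0 T, 0 ≤ ζ t) ∧
    (∀ t ∈ Set.Icc 0 T, ζ' t ≤ 0 → ζ'' t ≤ 0) ∧
    (∀ t ∈ Set.Icc 0 T, Q * (1 - t / T) ≤ ζ t) :=
  stmt18_general T Q hT hQ η θ' η' hη hηpos hθ'nonpos hη'nonpos ηbar θbar hηbar hθbar hθbar' hγ ζ ζ'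
    ζ'' hζ1 hζ2 hODE hζ0 hζT
end
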